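/- arXiv:0804.3779 — 9 statements merged into one kernel-verified Lean document; each statement's English description precedes it below -/
import Mathlib

section
/- For 0 < ε < 1/2, the function g(ε, p) = (p+ε)·ln(p/(p+ε)) + (1−p−ε)·ln((1−p)/(1−p−ε)) is monotonically increasing in p on the interval (0, 1/2 − ε) and monotonically decreasing in p on the interval (1/2, 1 − ε). -/
noncomputable def g (ε p : ℝ) : ℝ :=
  (p + ε) * Real.log (p / (p + ε)) + (1 - p - ε) * Real.log ((1 - p) / (1 - p - ε))

/-- For `x > 1`, `2 log x < x - 1/x`. -/
lemma aux_log_lt (x : ℝ) (hx : 1 < x) : 2 * Real.log x < x - 1 / x := by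
  have key : StrictMonoOn (fun t : ℝ => t - 1 / t - 2 * Real.log t) (Set.Ici 1) := by
    have hd : ∀ t : ℝ, 0 < t →
        HasDerivAt (fun t : ℝ => t - 1 / t - 2 * Real.log t) ((t - 1) ^ 2 / t ^ 2) t := by
      intro t ht
      have h1 : HasDerivAt (fun t : ℝ => t - 1 / t - 2 * Real.log t)
          (1 - (-(t ^ 2)⁻¹) - 2 * t⁻¹) t := by
        simp only [one_div]
        exact ((hasDerivAt_id t).sub (hasDerivAt_inv ht.ne')).sub
          ((Real.hasDerivAt_log ht.ne').const_mul 2)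
      convert h1 using 1
      field_simp
      ring
    apply strictMonoOn_of_deriv_pos (convex_Ici 1)
    · intro t ht
      exact (hd t (lt_of_lt_of_le one_pos ht)).continuousAt.continuousWithinAt
    · intro t ht
      rw [interior_Ici] at ht
      have ht1 : (1:ℝ) < t := ht
      rw [(hd t (by linarith)).deriv]
      exact div_pos (pow_pos (by linarith) 2) (by positivity)
  have := key (Set.self_mem_Ici) (Set.mem_Ici.mpr hx.le) hx
  simp at this
  rw [one_div]
  linarith

/-- For `x > 1`, `2(x-1)/(x+1) < log x`. -/
lemma aux_log_gt (x : ℝ) (hx : 1 < x) : 2 * (x - 1) / (x + 1) < Real.log x := by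
  have key : StrictMonoOn (fun t : ℝ => Real.log t - 2 * (t - 1) / (t + 1)) (Set.Ici 1) := by
    have hd : ∀ t : ℝ, 0 < t →
        HasDerivAt (fun t : ℝ => Real.log t - 2 * (t - 1) / (t + 1))
          ((t - 1) ^ 2 / (t * (t + 1) ^ 2)) t := by
      intro t ht
      have h2 : HasDerivAt (fun t : ℝ => 2 * (t - 1) / (t + 1))
          ((2 * 1 * (t + 1) - 2 * (t - 1) * 1) / (t + 1) ^ 2) t := by
        exact (((hasDerivAt_id t).sub_const 1).const_mul 2).div
          ((hasDerivAt_id t).add_const 1) (by linarith)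
      have h1 : HasDerivAt (fun t : ℝ => Real.log t - 2 * (t - 1) / (t + 1))
          (t⁻¹ - (2 * 1 * (t + 1) - 2 * (t - 1) * 1) / (t + 1) ^ 2) t :=
        (Real.hasDerivAt_log ht.ne').sub h2
      convert h1 using 1
      field_simp
      ring
    apply strictMonoOn_of_deriv_pos (convex_Ici 1)
    · intro t ht
      exact (hd t (lt_of_lt_of_le one_pos ht)).continuousAt.continuousWithinAt
    · intro t ht
      rw [interior_Ici] at ht
      have ht1 : (1:ℝ) < t := ht
      rw [(hd t (by linarith)).deriv]
      exact div_pos (pow_pos (by linarith) 2) (by positivity)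
  have := key (Set.self_mem_Ici) (Set.mem_Ici.mpr hx.le) hx
  simp at this
  linarith

/-- Log-mean < geometric-mean bound. -/
lemma log_sub_log_lt (a b : ℝ) (ha : 0 < a) (hab : a < b) :
    Real.log b - Real.log a < (b - a) / Real.sqrt (a * b) := by
  have hb : 0 < b := ha.trans hab
  have hsa : 0 < Real.sqrt a := Real.sqrt_pos.mpr ha
  have hsb : 0 < Real.sqrt b := Real.sqrt_pos.mpr hb
  have hsab : Real.sqrt a < Real.sqrt b := Real.sqrt_lt_sqrt ha.le hab
  have hx : 1 < Real.sqrt b / Real.sqrt a := (one_lt_div hsa).mpr hsab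
  have h := aux_log_lt _ hx
  have ha2 : Real.sqrt a ^ 2 = a := Real.sq_sqrt ha.le
  have hb2 : Real.sqrt b ^ 2 = b := Real.sq_sqrt hb.le
  have hlog : 2 * Real.log (Real.sqrt b / Real.sqrt a) = Real.log b - Real.log a := by
    rw [Real.log_div hsb.ne' hsa.ne', Real.log_sqrt ha.le, Real.log_sqrt hb.le]
    ring
  have hval : Real.sqrt b / Real.sqrt a - 1 / (Real.sqrt b / Real.sqrt a)
      = (b - a) / Real.sqrt (a * b) := by
    rw [Real.sqrt_mul ha.le]
    field_simp
    rw [hb2, ha2]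
  rw [hlog, hval] at h
  exact h

/-- Log-mean > harmonic/arithmetic bound. -/
lemma log_sub_log_gt (a b : ℝ) (ha : 0 < a) (hab : a < b) :
    2 * (b - a) / (a + b) < Real.log b - Real.log a := by
  have hb : 0 < b := ha.trans hab
  have hx : 1 < b / a := (one_lt_div ha).mpr hab
  have h := aux_log_gt _ hx
  have hlog : Real.log (b / a) = Real.log b - Real.log a := Real.log_div hb.ne' ha.ne'
  have hval : 2 * (b / a - 1) / (b / a + 1) = 2 * (b - a) / (a + b) := by
    have hy : (0:ℝ) < b / a + 1 := by positivity
    rw [div_eq_div_iff hy.ne' (by positivity : (0:ℝ) < a + b).ne']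
    field_simp
    ring
  rw [hlog, hval] at h
  exact h

lemma hasDerivAt_g (ε : ℝ) (p : ℝ) (hp : 0 < p) (hp1 : p + ε < 1) (hε0 : 0 < ε) :
    HasDerivAt (g ε)
      (Real.log p + Real.log (1 - p - ε) - Real.log (p + ε) - Real.log (1 - p)
        + ε / p + ε / (1 - p)) p := by
  have hpε : 0 < p + ε := by linarith
  have h1p : 0 < 1 - p := by linarith
  have h1pε : 0 < 1 - p - ε := by linarith
  have h1 : HasDerivAt (fun q : ℝ => q + ε) 1 p := (hasDerivAt_id p).add_const ε
  have h2 : HasDerivAt (fun q : ℝ => 1 - q - ε) (-1) p := by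
    have : HasDerivAt (fun q : ℝ => 1 - q) (-1) p := by
      simpa using (hasDerivAt_id p).const_sub 1
    simpa using this.sub_const ε
  have h3 : HasDerivAt (fun q : ℝ => 1 - q) (-1) p := by
    simpa using (hasDerivAt_id p).const_sub 1
  have hA : HasDerivAt (fun q : ℝ => (q + ε) * (Real.log q - Real.log (q + ε)))
      (1 * (Real.log p - Real.log (p + ε)) + (p + ε) * (p⁻¹ - 1 / (p + ε))) p :=
    h1.mul ((Real.hasDerivAt_log hp.ne').sub (h1.log hpε.ne'))
  have hB : HasDerivAt (fun q : ℝ => (1 - q - ε) * (Real.log (1 - q) - Real.log (1 - q - ε)))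
      ((-1) * (Real.log (1 - p) - Real.log (1 - p - ε))
        + (1 - p - ε) * ((-1) / (1 - p) - (-1) / (1 - p - ε))) p :=
    h2.mul ((h3.log h1p.ne').sub (h2.log h1pε.ne'))
  have hH := hA.add hB
  have heq : (fun q : ℝ => (q + ε) * (Real.log q - Real.log (q + ε))
      + (1 - q - ε) * (Real.log (1 - q) - Real.log (1 - q - ε))) =ᶠ[nhds p] g ε := by
    have e1 : ∀ᶠ q in nhds p, 0 < q := eventually_gt_nhds hp
    have e2 : ∀ᶠ q in nhds p, q < 1 - ε := eventually_lt_nhds (by linarith)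
    filter_upwards [e1, e2] with q hq1 hq2
    have hqε : 0 < q + ε := by linarith
    have hq1' : 0 < 1 - q := by linarith
    have hq1ε : 0 < 1 - q - ε := by linarith
    unfold g
    rw [Real.log_div hq1.ne' hqε.ne', Real.log_div hq1'.ne' hq1ε.ne']
  have hG := hH.congr_of_eventuallyEq heq.symm
  convert hG using 1
  · rfl
  · rfl
  field_simp
  ring

lemma gDerivPos (ε : ℝ) (hε0 : 0 < ε) (hε : ε < 1 / 2) (p : ℝ)
    (hp : 0 < p) (hp2 : p < 1 / 2 - ε) :
    0 < Real.log p + Real.log (1 - p - ε) - Real.log (p + ε) - Real.log (1 - p)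
        + ε / p + ε / (1 - p) := by
  have hpε : 0 < p + ε := by linarith
  have h1p : 0 < 1 - p := by linarith
  have h1pε : 0 < 1 - p - ε := by linarith
  set a := p * (1 - p - ε) with hadef
  set b := (p + ε) * (1 - p) with hbdef
  have ha : 0 < a := mul_pos hp h1pε
  have hb : 0 < b := mul_pos hpε h1p
  have hab : a < b := by nlinarith
  have hba : b - a = ε := by rw [hadef, hbdef]; ring
  have hM : 0 < p * (1 - p) := mul_pos hp h1p
  have h12 : 0 < 1 - 2 * p - ε := by linarith
  have hsq : (p * (1 - p)) ^ 2 ≤ a * b := by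
    nlinarith [mul_pos (mul_pos hp h1p) (mul_pos hε0 h12)]
  have hs : p * (1 - p) ≤ Real.sqrt (a * b) :=
    (Real.le_sqrt hM.le (mul_pos ha hb).le).mpr hsq
  have hspos : 0 < Real.sqrt (a * b) := Real.sqrt_pos.mpr (mul_pos ha hb)
  have h1 : Real.log b - Real.log a < (b - a) / Real.sqrt (a * b) :=
    log_sub_log_lt a b ha hab
  have h2 : (b - a) / Real.sqrt (a * b) ≤ (b - a) / (p * (1 - p)) := by
    apply div_le_div_of_nonneg_left (by linarith) hM hs
  have hεM : ε / p + ε / (1 - p) = ε / (p * (1 - p)) := by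
    field_simp; ring
  have hla : Real.log a = Real.log p + Real.log (1 - p - ε) :=
    Real.log_mul hp.ne' h1pε.ne'
  have hlb : Real.log b = Real.log (p + ε) + Real.log (1 - p) :=
    Real.log_mul hpε.ne' h1p.ne'
  rw [hba] at h1 h2
  have : Real.log b - Real.log a < ε / (p * (1 - p)) := lt_of_lt_of_le h1 h2
  rw [hla, hlb] at this
  linarith [this, hεM]

lemma gDerivNeg (ε : ℝ) (hε0 : 0 < ε) (hε : ε < 1 / 2) (p : ℝ)
    (hp : 1 / 2 < p) (hp2 : p < 1 - ε) :
    Real.log p + Real.log (1 - p - ε) - Real.log (p + ε) - Real.log (1 - p)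
        + ε / p + ε / (1 - p) < 0 := by
  have hp0 : 0 < p := by linarith
  have hpε : 0 < p + ε := by linarith
  have h1p : 0 < 1 - p := by linarith
  have h1pε : 0 < 1 - p - ε := by linarith
  set a := p * (1 - p - ε) with hadef
  set b := (p + ε) * (1 - p) with hbdef
  have ha : 0 < a := mul_pos hp0 h1pε
  have hb : 0 < b := mul_pos hpε h1p
  have hab : a < b := by nlinarith
  have hba : b - a = ε := by rw [hadef, hbdef]; ring
  have hM : 0 < p * (1 - p) := mul_pos hp0 h1p
  have hsum : a + b ≤ 2 * (p * (1 - p)) := by nlinarith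
  have h1 : 2 * (b - a) / (a + b) < Real.log b - Real.log a :=
    log_sub_log_gt a b ha hab
  have h2 : (b - a) / (p * (1 - p)) ≤ 2 * (b - a) / (a + b) := by
    rw [div_le_div_iff₀ hM (by linarith)]
    nlinarith
  have hεM : ε / p + ε / (1 - p) = ε / (p * (1 - p)) := by
    field_simp; ring
  have hla : Real.log a = Real.log p + Real.log (1 - p - ε) :=
    Real.log_mul hp0.ne' h1pε.ne'
  have hlb : Real.log b = Real.log (p + ε) + Real.log (1 - p) :=
    Real.log_mul hpε.ne' h1p.ne'
  rw [hba] at h1 h2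
  have : ε / (p * (1 - p)) < Real.log b - Real.log a := lt_of_le_of_lt h2 h1
  rw [hla, hlb] at this
  linarith [this, hεM]

theorem stmt_0 (ε : ℝ) (hε0 : 0 < ε) (hε : ε < 1 / 2) :
    StrictMonoOn (fun p => g ε p) (Set.Ioo 0 (1 / 2 - ε)) ∧
    StrictAntiOn (fun p => g ε p) (Set.Ioo (1 / 2) (1 - ε)) := by
  constructor
  · apply strictMonoOn_of_deriv_pos (convex_Ioo _ _)
    · intro p hp
      obtain ⟨hp1, hp2⟩ := hp
      exact (hasDerivAt_g ε p hp1 (by linarith) hε0).continuousAt.continuousWithinAt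
    · intro p hp
      rw [interior_Ioo] at hp
      obtain ⟨hp1, hp2⟩ := hp
      rw [(hasDerivAt_g ε p hp1 (by linarith) hε0).deriv]
      exact gDerivPos ε hε0 hε p hp1 hp2
  · apply strictAntiOn_of_deriv_neg (convex_Ioo _ _)
    · intro p hp
      obtain ⟨hp1, hp2⟩ := hp
      exact (hasDerivAt_g ε p (by linarith) (by linarith) hε0).continuousAt.continuousWithinAt
    · intro p hp
      rw [interior_Ioo] at hp
      obtain ⟨hp1, hp2⟩ := hp
      rw [(hasDerivAt_g ε p (by linarith) (by linarith) hε0).deriv]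
      exact gDerivNeg ε hε0 hε p hp1 hp2
end

section
/- For 0 < ε < 1/2, the function p ↦ g(−ε, p) = (p−ε)·ln(p/(p−ε)) + (1−p+ε)·ln((1−p)/(1−p+ε)) is monotonically increasing in p on (ε, 1/2) and monotonically decreasing in p on (1/2 + ε, 1). -/
/-- `log y > 1 - 1/y` for `y > 1`. -/
lemma aux_log_lb {y : ℝ} (hy : 1 < y) : 1 - y⁻¹ < Real.log y := by
  have h0 : 0 < y := by linarith
  have h := Real.log_lt_sub_one_of_pos (x := y⁻¹) (by positivity)
    (by rw [ne_eq, inv_eq_one]; linarith)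
  rw [Real.log_inv] at h
  linarith

lemma aux_hd1 {y : ℝ} (hy : 0 < y) :
    HasDerivAt (fun y => (y + 1) * Real.log y - 2 * (y - 1))
      (Real.log y + (y + 1) * y⁻¹ - 2) y := by
  have h := (((hasDerivAt_id y).add_const 1).mul (Real.hasDerivAt_log hy.ne')).sub
    (((hasDerivAt_id y).sub_const 1).const_mul 2)
  refine h.congr_deriv ?_
  simp only [id_eq]
  ring

/-- `2(x-1) < (x+1) log x` for `x > 1`: log mean is below arithmetic mean. -/
lemma aux_ineq1 {x : ℝ} (hx : 1 < x) : 2 * (x - 1) < (x + 1) * Real.log x := by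
  have key : StrictMonoOn (fun y => (y + 1) * Real.log y - 2 * (y - 1)) (Set.Ici 1) := by
    apply strictMonoOn_of_deriv_pos (convex_Ici 1)
    · intro y hy
      exact (aux_hd1 (by exact lt_of_lt_of_le one_pos hy)).continuousAt.continuousWithinAt
    · rw [interior_Ici]
      intro y hy
      rw [(aux_hd1 (by exact lt_trans one_pos hy)).deriv]
      have h1 := aux_log_lb hy
      have h0 : 0 < y := lt_trans one_pos hy
      have h2 : y * y⁻¹ = 1 := mul_inv_cancel₀ h0.ne'
      nlinarith [inv_pos.mpr h0]
  have h := key (Set.self_mem_Ici) (Set.mem_Ici.mpr hx.le) hx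
  simp only [Real.log_one] at h
  linarith

lemma aux_hd2 {y : ℝ} (hy : 0 < y) :
    HasDerivAt (fun y => y - y⁻¹ - 2 * Real.log y)
      (1 + (y ^ 2)⁻¹ - 2 * y⁻¹) y := by
  have h := (((hasDerivAt_id y).sub (hasDerivAt_inv hy.ne')).sub
    ((Real.hasDerivAt_log hy.ne').const_mul 2))
  refine h.congr_deriv ?_
  ring

/-- `2 log u < u - 1/u` for `u > 1`: geometric mean is below log mean. -/
lemma aux_ineq2 {u : ℝ} (hu : 1 < u) : 2 * Real.log u < u - u⁻¹ := by
  have key : StrictMonoOn (fun y => y - y⁻¹ - 2 * Real.log y) (Set.Ici 1) := by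
    apply strictMonoOn_of_deriv_pos (convex_Ici 1)
    · intro y hy
      exact (aux_hd2 (by exact lt_of_lt_of_le one_pos hy)).continuousAt.continuousWithinAt
    · rw [interior_Ici]
      intro y hy
      rw [(aux_hd2 (by exact lt_trans one_pos hy)).deriv]
      have h0 : 0 < y := lt_trans one_pos hy
      have hy1 : y * y⁻¹ = 1 := mul_inv_cancel₀ h0.ne'
      have hy' : 1 < y := hy
      have hinv : y⁻¹ < 1 := by nlinarith [inv_pos.mpr h0]
      have h2 : (y ^ 2)⁻¹ = y⁻¹ * y⁻¹ := by rw [sq, mul_inv]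
      nlinarith [mul_pos (sub_pos.mpr hinv) (sub_pos.mpr hinv)]
  have h := key (Set.self_mem_Ici) (Set.mem_Ici.mpr hu.le) hu
  simp only [Real.log_one] at h
  norm_num at h
  linarith

/-- Log mean below arithmetic mean, two-variable form. -/
lemma logMean_lt_arith {A B : ℝ} (hB : 0 < B) (hAB : B < A) :
    2 * (A - B) < (A + B) * (Real.log A - Real.log B) := by
  have hA : 0 < A := lt_trans hB hAB
  have hx : 1 < A / B := (one_lt_div hB).mpr hAB
  have key := aux_ineq1 hx
  have h := mul_lt_mul_of_pos_left key hB
  rw [Real.log_div hA.ne' hB.ne'] at h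
  calc 2 * (A - B) = B * (2 * (A / B - 1)) := by field_simp
    _ < B * ((A / B + 1) * (Real.log A - Real.log B)) := h
    _ = (A + B) * (Real.log A - Real.log B) := by field_simp

/-- Geometric mean below log mean, two-variable form. -/
lemma geom_lt_logMean {A B : ℝ} (hB : 0 < B) (hAB : B < A) :
    Real.sqrt (A * B) * (Real.log A - Real.log B) < A - B := by
  have hA : 0 < A := lt_trans hB hAB
  set u := Real.sqrt (A / B) with hu_def
  set s := Real.sqrt (A * B) with hs_def
  have hABpos : (0:ℝ) < A * B := by positivity
  have hs : 0 < s := Real.sqrt_pos.mpr hABpos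
  have hu : 1 < u := by
    rw [hu_def, show (1:ℝ) = Real.sqrt 1 by simp]
    exact Real.sqrt_lt_sqrt (by norm_num) ((one_lt_div hB).mpr hAB)
  have hu0 : 0 < u := lt_trans one_pos hu
  have hsu : s * u = A := by
    rw [hs_def, hu_def, ← Real.sqrt_mul hABpos.le]
    rw [show A * B * (A / B) = A ^ 2 by field_simp]
    exact Real.sqrt_sq hA.le
  have hs2 : s * s = A * B := Real.mul_self_sqrt hABpos.le
  have hsdivu : s * u⁻¹ = B := by
    have hne : s * u ≠ 0 := by rw [hsu]; exact hA.ne'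
    have h1 : s * u⁻¹ * (s * u) = B * (s * u) := by
      calc s * u⁻¹ * (s * u) = (s * s) * (u * u⁻¹) := by ring
        _ = (A * B) * 1 := by rw [hs2, mul_inv_cancel₀ hu0.ne']
        _ = B * (s * u) := by rw [hsu]; ring
    exact mul_right_cancel₀ hne h1
  have key := aux_ineq2 hu
  have h := mul_lt_mul_of_pos_left key hs
  have hlog : Real.log A - Real.log B = 2 * Real.log u := by
    rw [hu_def, Real.log_sqrt (by positivity), ← Real.log_div hA.ne' hB.ne']
    ring
  rw [hlog]
  calc s * (2 * Real.log u) < s * (u - u⁻¹) := h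
    _ = s * u - s * u⁻¹ := by ring
    _ = A - B := by rw [hsu, hsdivu]

/-- Derivative of `g (-ε)` on `(ε, 1)`. -/
lemma g_hasDeriv (ε : ℝ) (hε0 : 0 < ε) {p : ℝ} (hp : p ∈ Set.Ioo ε 1) :
    HasDerivAt (fun p => g (-ε) p)
      (Real.log p - Real.log (p - ε) + Real.log (1 - p + ε) - Real.log (1 - p)
        - ε / p - ε / (1 - p)) p := by
  obtain ⟨hpl, hpu⟩ := hp
  have hp0 : 0 < p := lt_trans hε0 hpl
  have hpε : 0 < p - ε := by linarith
  have h1p : 0 < 1 - p := by linarith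
  have h1pε : 0 < 1 - p + ε := by linarith
  -- the "nice" form F
  have hA : HasDerivAt (fun x : ℝ => x - ε) 1 p := (hasDerivAt_id p).sub_const ε
  have hlogp : HasDerivAt Real.log p⁻¹ p := Real.hasDerivAt_log hp0.ne'
  have hlogpe : HasDerivAt (fun x : ℝ => Real.log (x - ε)) (p - ε)⁻¹ p := by
    have h := (Real.hasDerivAt_log hpε.ne').comp p hA
    simpa [Function.comp_def] using h
  have hterm1 : HasDerivAt (fun x : ℝ => (x - ε) * (Real.log x - Real.log (x - ε)))
      (1 * (Real.log p - Real.log (p - ε)) + (p - ε) * (p⁻¹ - (p - ε)⁻¹)) p :=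
    hA.mul (hlogp.sub hlogpe)
  have hB : HasDerivAt (fun x : ℝ => 1 - x + ε) (-1) p := by
    have h := ((hasDerivAt_id p).const_sub 1).add_const ε
    simpa using h
  have hC : HasDerivAt (fun x : ℝ => 1 - x) (-1) p := by
    have h := (hasDerivAt_id p).const_sub 1
    simpa using h
  have hlog1p : HasDerivAt (fun x : ℝ => Real.log (1 - x)) (-(1 - p)⁻¹) p := by
    have h := (Real.hasDerivAt_log h1p.ne').comp p hC
    simpa [Function.comp_def] using h
  have hlog1pe : HasDerivAt (fun x : ℝ => Real.log (1 - x + ε)) (-(1 - p + ε)⁻¹) p := by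
    have h := (Real.hasDerivAt_log h1pε.ne').comp p hB
    simpa [Function.comp_def] using h
  have hterm2 : HasDerivAt
      (fun x : ℝ => (1 - x + ε) * (Real.log (1 - x) - Real.log (1 - x + ε)))
      ((-1) * (Real.log (1 - p) - Real.log (1 - p + ε))
        + (1 - p + ε) * (-(1 - p)⁻¹ - -(1 - p + ε)⁻¹)) p :=
    hB.mul (hlog1p.sub hlog1pe)
  have hF : HasDerivAt
      (fun x : ℝ => (x - ε) * (Real.log x - Real.log (x - ε))
        + (1 - x + ε) * (Real.log (1 - x) - Real.log (1 - x + ε)))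
      (Real.log p - Real.log (p - ε) + Real.log (1 - p + ε) - Real.log (1 - p)
        - ε / p - ε / (1 - p)) p := by
    have h := hterm1.add hterm2
    refine h.congr_deriv ?_
    field_simp
    ring
  apply hF.congr_of_eventuallyEq
  filter_upwards [Ioo_mem_nhds hpl hpu] with x hx
  obtain ⟨hxl, hxu⟩ := hx
  have hx0 : 0 < x := lt_trans hε0 hxl
  have hxε : 0 < x - ε := by linarith
  have h1x : 0 < 1 - x := by linarith
  have h1xε : 0 < 1 - x + ε := by linarith
  show g (-ε) x = _
  rw [g, show x + -ε = x - ε by ring, show 1 - x - -ε = 1 - x + ε by ring,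
    Real.log_div hx0.ne' hxε.ne', Real.log_div h1x.ne' h1xε.ne']

theorem stmt_1 (ε : ℝ) (hε0 : 0 < ε) (hε : ε < 1 / 2) :
    StrictMonoOn (fun p => g (-ε) p) (Set.Ioo ε (1 / 2)) ∧
    StrictAntiOn (fun p => g (-ε) p) (Set.Ioo (1 / 2 + ε) 1) := by
  constructor
  · apply strictMonoOn_of_deriv_pos (convex_Ioo ε (1/2))
    · intro x hx
      have hx' : x ∈ Set.Ioo ε 1 := ⟨hx.1, by have := hx.2; linarith⟩
      exact (g_hasDeriv ε hε0 hx').continuousAt.continuousWithinAt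
    · rw [interior_Ioo]
      intro x hx
      obtain ⟨hxl, hxu⟩ := hx
      have hx' : x ∈ Set.Ioo ε 1 := ⟨hxl, by linarith⟩
      rw [(g_hasDeriv ε hε0 hx').deriv]
      have hx0 : 0 < x := lt_trans hε0 hxl
      have hxε : 0 < x - ε := by linarith
      have h1x : 0 < 1 - x := by linarith
      have h1xε : 0 < 1 - x + ε := by linarith
      set A := x * (1 - x + ε) with hA_def
      set B := (x - ε) * (1 - x) with hB_def
      have hB : 0 < B := by positivity
      have hApos : 0 < A := by positivity
      have hBA : B < A := by rw [hA_def, hB_def]; nlinarith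
      have hlogA : Real.log A = Real.log x + Real.log (1 - x + ε) :=
        Real.log_mul hx0.ne' h1xε.ne'
      have hlogB : Real.log B = Real.log (x - ε) + Real.log (1 - x) :=
        Real.log_mul hxε.ne' h1x.ne'
      have hL : 0 < Real.log A - Real.log B := by
        have := Real.log_lt_log hB hBA
        linarith
      have h1 := logMean_lt_arith hB hBA
      have hsum : A + B < 2 * x * (1 - x) := by
        rw [hA_def, hB_def]; nlinarith
      have h2 : (A + B) * (Real.log A - Real.log B)
          < (2 * x * (1 - x)) * (Real.log A - Real.log B) :=
        mul_lt_mul_of_pos_right hsum hL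
      have hAB : A - B = ε := by rw [hA_def, hB_def]; ring
      rw [hAB] at h1
      have h3 : ε / x + ε / (1 - x) < Real.log A - Real.log B := by
        rw [show ε / x + ε / (1 - x) = 2 * ε / (2 * x * (1 - x)) by
          field_simp; ring]
        rw [div_lt_iff₀ (by positivity)]
        linarith
      rw [hlogA, hlogB] at h3
      linarith
  · apply strictAntiOn_of_deriv_neg (convex_Ioo (1/2 + ε) 1)
    · intro x hx
      have hx' : x ∈ Set.Ioo ε 1 := ⟨by have := hx.1; linarith, hx.2⟩
      exact (g_hasDeriv ε hε0 hx').continuousAt.continuousWithinAt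
    · rw [interior_Ioo]
      intro x hx
      obtain ⟨hxl, hxu⟩ := hx
      have hx' : x ∈ Set.Ioo ε 1 := ⟨by linarith, hxu⟩
      rw [(g_hasDeriv ε hε0 hx').deriv]
      have hx0 : 0 < x := by linarith
      have hxε : 0 < x - ε := by linarith
      have h1x : 0 < 1 - x := by linarith
      have h1xε : 0 < 1 - x + ε := by linarith
      set A := x * (1 - x + ε) with hA_def
      set B := (x - ε) * (1 - x) with hB_def
      have hB : 0 < B := by positivity
      have hApos : 0 < A := by positivity
      have hBA : B < A := by rw [hA_def, hB_def]; nlinarith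
      have hlogA : Real.log A = Real.log x + Real.log (1 - x + ε) :=
        Real.log_mul hx0.ne' h1xε.ne'
      have hlogB : Real.log B = Real.log (x - ε) + Real.log (1 - x) :=
        Real.log_mul hxε.ne' h1x.ne'
      have hL : 0 < Real.log A - Real.log B := by
        have := Real.log_lt_log hB hBA
        linarith
      have h1 := geom_lt_logMean hB hBA
      have hAB : A - B = ε := by rw [hA_def, hB_def]; ring
      rw [hAB] at h1
      -- x(1-x) < sqrt (A*B)
      have hM2 : (x * (1 - x)) ^ 2 < A * B := by
        rw [hA_def, hB_def]
        nlinarith [mul_pos (mul_pos hx0 h1x) (mul_pos hε0 (show 0 < 2*x - 1 - ε by linarith))]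
      have hM : x * (1 - x) < Real.sqrt (A * B) := by
        rw [show x * (1 - x) = Real.sqrt ((x * (1 - x)) ^ 2) by
          rw [Real.sqrt_sq (by positivity)]]
        exact Real.sqrt_lt_sqrt (by positivity) hM2
      have h2 : (x * (1 - x)) * (Real.log A - Real.log B)
          < Real.sqrt (A * B) * (Real.log A - Real.log B) :=
        mul_lt_mul_of_pos_right hM hL
      have h3 : Real.log A - Real.log B < ε / x + ε / (1 - x) := by
        rw [show ε / x + ε / (1 - x) = ε / (x * (1 - x)) by field_simp; ring]
        rw [lt_div_iff₀ (by positivity)]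
        calc (Real.log A - Real.log B) * (x * (1 - x))
            = (x * (1 - x)) * (Real.log A - Real.log B) := by ring
          _ < Real.sqrt (A * B) * (Real.log A - Real.log B) := h2
          _ < ε := h1
      rw [hlogA, hlogB] at h3
      linarith
end

section
/- For 0 < ε < 1, the function p ↦ g(εp, p) is monotonically decreasing on (0, 1/(1+ε)), and the function p ↦ g(−εp, p) is monotonically decreasing on (0, 1). -/
lemma key_aux (c m : ℝ) (hc0 : 0 < c) (hc1 : c ≠ 1) (hm1 : m ≤ 1) (hm2 : c * m ≤ 1) :
    StrictAntiOn (fun p => c * p * Real.log (1/c) +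
      (1 - c*p) * (Real.log (1-p) - Real.log (1 - c*p))) (Set.Ioo 0 m) := by
  have hd : ∀ p ∈ Set.Ioo (0:ℝ) m,
      HasDerivAt (fun p => c * p * Real.log (1/c) +
        (1 - c*p) * (Real.log (1-p) - Real.log (1 - c*p)))
        (c * Real.log (1/c) + ((0-c) * (Real.log (1-p) - Real.log (1 - c*p)) +
          (1 - c*p) * ((0-1)/(1-p) - (0-c)/(1 - c*p)))) p := by
    intro p hp
    have hcm : c * p < c * m := mul_lt_mul_of_pos_left hp.2 hc0
    have hu : (1:ℝ) - p ≠ 0 := by nlinarith [hp.1, hp.2]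
    have hv : (1:ℝ) - c*p ≠ 0 := by nlinarith [hp.1]
    have h1 : HasDerivAt (fun p : ℝ => c * p * Real.log (1/c)) (c * Real.log (1/c)) p := by
      simpa using ((hasDerivAt_id p).const_mul c).mul_const (Real.log (1/c))
    have h2 : HasDerivAt (fun p : ℝ => 1 - p) (0 - 1) p :=
      (hasDerivAt_const p 1).sub (hasDerivAt_id p)
    have h3 : HasDerivAt (fun p : ℝ => 1 - c * p) (0 - c) p := by
      exact ((hasDerivAt_const p 1).sub ((hasDerivAt_id p).const_mul c)).congr_deriv (by ring)
    exact h1.add (h3.mul ((h2.log hu).sub (h3.log hv)))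
  apply strictAntiOn_of_deriv_neg (convex_Ioo 0 m)
  · exact fun p hp => (hd p hp).continuousAt.continuousWithinAt
  · intro p hp
    rw [interior_Ioo] at hp
    rw [(hd p hp).deriv]
    have hcm : c * p < c * m := mul_lt_mul_of_pos_left hp.2 hc0
    have hu : (0:ℝ) < 1 - p := by nlinarith [hp.1, hp.2]
    have hv : (0:ℝ) < 1 - c*p := by nlinarith [hp.1]
    set t : ℝ := (1 - c*p) / (1 - p) with ht_def
    have ht : 0 < t := div_pos hv hu
    have htc : t ≠ c := by
      intro h
      rw [ht_def, div_eq_iff hu.ne'] at h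
      apply hc1
      nlinarith
    have htc1 : t / c ≠ 1 := by
      intro h
      apply htc
      field_simp at h
      linarith
    have hlog : Real.log (t/c) < t/c - 1 :=
      Real.log_lt_sub_one_of_pos (div_pos ht hc0) htc1
    have hlog' : c * Real.log (t/c) < c * (t/c - 1) := mul_lt_mul_of_pos_left hlog hc0
    have e1 : c * (t/c - 1) = t - c := by field_simp
    have e2 : Real.log (t/c) = (Real.log (1 - c*p) - Real.log (1-p)) - Real.log c := by
      rw [Real.log_div ht.ne' hc0.ne', Real.log_div hv.ne' hu.ne']
    have e3 : (1 - c*p) * ((0-1)/(1-p) - (0-c)/(1 - c*p)) = c - t := by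
      rw [ht_def]; field_simp; ring
    rw [one_div, Real.log_inv, e3]
    rw [e2, e1] at hlog'
    nlinarith [hlog']
  
theorem stmt_3 (ε : ℝ) (hε0 : 0 < ε) (hε : ε < 1) :
    StrictAntiOn (fun p => g (ε * p) p) (Set.Ioo 0 (1 / (1 + ε))) ∧
    StrictAntiOn (fun p => g (-(ε * p)) p) (Set.Ioo 0 1) := by
  have hε1 : (0:ℝ) < 1 + ε := by linarith
  constructor
  · have h := key_aux (1+ε) (1/(1+ε)) hε1 (by linarith)
      (by rw [div_le_one hε1]; linarith) (by field_simp; exact le_rfl)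
    have e : ∀ z ∈ Set.Ioo (0:ℝ) (1/(1+ε)), g (ε*z) z =
        (1+ε) * z * Real.log (1/(1+ε)) +
        (1 - (1+ε)*z) * (Real.log (1-z) - Real.log (1 - (1+ε)*z)) := by
      intro z hz
      obtain ⟨hz0, hz1⟩ := hz
      have hzlt : (1+ε)*z < 1 := by
        rw [lt_div_iff₀ hε1] at hz1; linarith [hz1]
      have hu : (0:ℝ) < 1 - z := by nlinarith
      have hv : (0:ℝ) < 1 - (1+ε)*z := by linarith
      have h1 : z + ε*z = (1+ε)*z := by ring
      have h2 : (1:ℝ) - z - ε*z = 1 - (1+ε)*z := by ring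
      have hq : z / (z + ε*z) = 1/(1+ε) := by
        rw [h1, mul_comm, ← div_div, div_self hz0.ne']
      simp only [g]
      rw [hq, h1, h2, Real.log_div hu.ne' hv.ne']
    intro x hx y hy hxy
    simp only []
    rw [e x hx, e y hy]
    exact h hx hy hxy
  · have hc0 : (0:ℝ) < 1 - ε := by linarith
    have h := key_aux (1-ε) 1 hc0 (by intro hh; linarith) le_rfl (by linarith)
    have e : ∀ z ∈ Set.Ioo (0:ℝ) 1, g (-(ε*z)) z =
        (1-ε) * z * Real.log (1/(1-ε)) +
        (1 - (1-ε)*z) * (Real.log (1-z) - Real.log (1 - (1-ε)*z)) := by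
      intro z hz
      obtain ⟨hz0, hz1⟩ := hz
      have hzlt : (1-ε)*z < 1 := by nlinarith
      have hu : (0:ℝ) < 1 - z := by linarith
      have hv : (0:ℝ) < 1 - (1-ε)*z := by linarith
      have h1 : z + -(ε*z) = (1-ε)*z := by ring
      have h2 : (1:ℝ) - z - -(ε*z) = 1 - (1-ε)*z := by ring
      have hz' : (0:ℝ) < (1-ε)*z := mul_pos hc0 hz0
      have hq : z / (z + -(ε*z)) = 1/(1-ε) := by
        rw [h1, mul_comm, ← div_div, div_self hz0.ne']
      simp only [g]
      rw [hq, h1, h2, Real.log_div hu.ne' hv.ne']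
    intro x hx y hy hxy
    simp only []
    rw [e x hx, e y hy]
    exact h hx hy hxy
end

section
/- Let K be a hypergeometric random variable counting the number of marked units among n units drawn without replacement from a population of N units containing M marked units, where 1 ≤ n ≤ N and p = M/N. Then for any 0 < ε < 1 − p, Pr{K/n ≥ p + ε} ≤ exp(n·g(ε, p)), where g(ε,p) = (p+ε)·ln(p/(p+ε)) + (1−p−ε)·ln((1−p)/(1−p−ε)). -/
open scoped Classical
open Finset

/-- Probability that a hypergeometric random variable `K` (number of marked units among
`n` units drawn without replacement from `N` units of which `M` are marked) satisfies `P K`. -/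
noncomputable def prHyp (N M n : ℕ) (P : ℕ → Prop) : ℝ :=
  ∑ i ∈ Finset.range (n + 1),
    if P i then (M.choose i * (N - M).choose (n - i) : ℝ) / (N.choose n) else 0


private lemma chm (M j m : ℕ) :
    M.choose (j + m) * (j + m).choose j = M.choose j * (M - j).choose m := by
  rcases le_or_gt (j + m) M with h | h
  · have h2 := Nat.choose_mul (n := M) (Nat.le_add_right j m)
    simpa [Nat.add_sub_cancel_left] using h2
  · rw [Nat.choose_eq_zero_of_lt h, Nat.zero_mul]
    rcases le_or_gt j M with hj | hj
    · rw [Nat.choose_eq_zero_of_lt (show M - j < m by omega), Nat.mul_zero]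
    · rw [Nat.choose_eq_zero_of_lt hj, Nat.zero_mul]

private lemma sum_choose_id (N M n j : ℕ) (hM : M ≤ N) (hj : j ≤ n) :
    ∑ k ∈ range (n + 1), k.choose j * (M.choose k * (N - M).choose (n - k))
      = M.choose j * (N - j).choose (n - j) := by
  have h1 : ∑ k ∈ range (n + 1), k.choose j * (M.choose k * (N - M).choose (n - k))
      = ∑ k ∈ Ico j (n + 1), k.choose j * (M.choose k * (N - M).choose (n - k)) := by
    rw [range_eq_Ico, ← Finset.sum_Ico_consecutive _ (Nat.zero_le j) (by omega)]
    have hz : ∑ k ∈ Ico 0 j, k.choose j * (M.choose k * (N - M).choose (n - k)) = 0 := by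
      apply Finset.sum_eq_zero
      intro k hk
      rw [Nat.choose_eq_zero_of_lt (mem_Ico.1 hk).2, Nat.zero_mul]
    rw [hz, Nat.zero_add]
  rw [h1, Finset.sum_Ico_eq_sum_range]
  have hr : n + 1 - j = (n - j) + 1 := by omega
  rw [hr]
  have h2 : ∀ m ∈ range (n - j + 1),
      (j + m).choose j * (M.choose (j + m) * (N - M).choose (n - (j + m)))
        = M.choose j * ((M - j).choose m * (N - M).choose (n - j - m)) := by
    intro m hm
    have hnm : n - (j + m) = n - j - m := by omega
    rw [hnm, ← Nat.mul_assoc, Nat.mul_comm ((j + m).choose j), chm, Nat.mul_assoc]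
  rw [Finset.sum_congr rfl h2, ← Finset.mul_sum]
  rcases le_or_gt j M with hjM | hjM
  · congr 1
    have hv : (M - j) + (N - M) = N - j := by omega
    rw [← hv, Nat.add_choose_eq, Finset.Nat.sum_antidiagonal_eq_sum_range_succ
      (fun a b => (M - j).choose a * (N - M).choose b)]
  · rw [Nat.choose_eq_zero_of_lt hjM, Nat.zero_mul, Nat.zero_mul]

private lemma desc_le (N M : ℕ) (hM : M ≤ N) :
    ∀ j, M.descFactorial j * N ^ j ≤ N.descFactorial j * M ^ j
  | 0 => le_refl _
  | (j + 1) => by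
    have ih := desc_le N M hM j
    have h1 : (M - j) * N ≤ (N - j) * M := by
      rw [Nat.sub_mul, Nat.sub_mul, Nat.mul_comm N M]
      exact Nat.sub_le_sub_left (Nat.mul_le_mul_left j hM) _
    rw [Nat.descFactorial_succ, Nat.descFactorial_succ, pow_succ, pow_succ]
    calc (M - j) * M.descFactorial j * (N ^ j * N)
        = ((M - j) * N) * (M.descFactorial j * N ^ j) := by ring
      _ ≤ ((N - j) * M) * (N.descFactorial j * M ^ j) := Nat.mul_le_mul h1 ih
      _ = (N - j) * N.descFactorial j * (M ^ j * M) := by ring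

private lemma choose_le_p (N M j : ℕ) (hM : M ≤ N) (hN : 0 < N) :
    (M.choose j : ℝ) ≤ (N.choose j : ℝ) * ((M : ℝ) / N) ^ j := by
  have h := desc_le N M hM j
  rw [Nat.descFactorial_eq_factorial_mul_choose, Nat.descFactorial_eq_factorial_mul_choose,
    Nat.mul_assoc, Nat.mul_assoc] at h
  have h2 : M.choose j * N ^ j ≤ N.choose j * M ^ j :=
    Nat.le_of_mul_le_mul_left h (Nat.factorial_pos j)
  have hN' : (0 : ℝ) < (N : ℝ) := by exact_mod_cast hN
  rw [div_pow, ← mul_div_assoc, le_div_iff₀ (pow_pos hN' j)]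
  exact_mod_cast h2


private lemma mgf_le (N M n : ℕ) (hM : M ≤ N) (hnN : n ≤ N) (hN : 0 < N)
    (s : ℝ) (hs : 0 ≤ s) :
    ∑ k ∈ range (n + 1), (M.choose k : ℝ) * ((N - M).choose (n - k) : ℝ) * (1 + s) ^ k
      ≤ (N.choose n : ℝ) * (1 + ((M : ℝ) / N) * s) ^ n := by
  set p : ℝ := (M : ℝ) / N with hpdef
  have hp0 : 0 ≤ p := by positivity
  have hpow : ∀ k ≤ n, (1 + s) ^ k = ∑ j ∈ range (n + 1), (k.choose j : ℝ) * s ^ j := by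
    intro k hk
    rw [add_comm (1 : ℝ) s, add_pow]
    rw [Finset.sum_subset (Finset.range_subset_range.2 (Nat.succ_le_succ hk))]
    · exact Finset.sum_congr rfl fun j _ => by rw [one_pow]; ring
    · intro j hj hjk
      rw [Nat.choose_eq_zero_of_lt (by simp at hj hjk; omega)]
      simp
  calc ∑ k ∈ range (n + 1), (M.choose k : ℝ) * ((N - M).choose (n - k) : ℝ) * (1 + s) ^ k
      = ∑ k ∈ range (n + 1), ∑ j ∈ range (n + 1),
          (M.choose k : ℝ) * ((N - M).choose (n - k) : ℝ) * ((k.choose j : ℝ) * s ^ j) := by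
        refine Finset.sum_congr rfl fun k hk => ?_
        rw [hpow k (by simpa using Nat.lt_succ_iff.1 (mem_range.1 hk)), Finset.mul_sum]
    _ = ∑ j ∈ range (n + 1), ∑ k ∈ range (n + 1),
          (M.choose k : ℝ) * ((N - M).choose (n - k) : ℝ) * ((k.choose j : ℝ) * s ^ j) :=
        Finset.sum_comm
    _ = ∑ j ∈ range (n + 1),
          ((M.choose j : ℝ) * ((N - j).choose (n - j) : ℝ)) * s ^ j := by
        refine Finset.sum_congr rfl fun j hj => ?_
        have hid := sum_choose_id N M n j hM (Nat.lt_succ_iff.1 (mem_range.1 hj))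
        calc ∑ k ∈ range (n + 1),
              (M.choose k : ℝ) * ((N - M).choose (n - k) : ℝ) * ((k.choose j : ℝ) * s ^ j)
            = (∑ k ∈ range (n + 1),
                ((k.choose j * (M.choose k * (N - M).choose (n - k)) : ℕ) : ℝ)) * s ^ j := by
              rw [Finset.sum_mul]
              refine Finset.sum_congr rfl fun k _ => ?_
              push_cast; ring
          _ = ((M.choose j : ℝ) * ((N - j).choose (n - j) : ℝ)) * s ^ j := by
              rw [← Nat.cast_sum, hid]; push_cast; ring
    _ ≤ ∑ j ∈ range (n + 1), (N.choose n : ℝ) * ((n.choose j : ℝ) * (p * s) ^ j) := by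
        refine Finset.sum_le_sum fun j hj => ?_
        have hjn : j ≤ n := Nat.lt_succ_iff.1 (mem_range.1 hj)
        have hcc : (N.choose n : ℝ) * (n.choose j : ℝ)
            = (N.choose j : ℝ) * ((N - j).choose (n - j) : ℝ) := by
          exact_mod_cast congrArg (Nat.cast (R := ℝ)) (Nat.choose_mul (n := N) hjn)
        have hle := choose_le_p N M j hM hN
        calc (M.choose j : ℝ) * ((N - j).choose (n - j) : ℝ) * s ^ j
            ≤ ((N.choose j : ℝ) * p ^ j) * ((N - j).choose (n - j) : ℝ) * s ^ j := by
              have : (0:ℝ) ≤ ((N - j).choose (n - j) : ℝ) := by positivity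
              have : (0:ℝ) ≤ s ^ j := by positivity
              gcongr
          _ = ((N.choose j : ℝ) * ((N - j).choose (n - j) : ℝ)) * (p ^ j * s ^ j) := by ring
          _ = (N.choose n : ℝ) * ((n.choose j : ℝ) * (p * s) ^ j) := by
              rw [← hcc, mul_pow]; ring
    _ = (N.choose n : ℝ) * (1 + p * s) ^ n := by
        rw [← Finset.mul_sum]
        congr 1
        rw [add_comm (1 : ℝ) (p * s), add_pow]
        exact (Finset.sum_congr rfl fun j _ => by rw [one_pow]; ring).symm

theorem stmt_4 (N M n : ℕ) (hn : 1 ≤ n) (hnN : n ≤ N) (hM : M ≤ N)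
    (p ε : ℝ) (hp : p = (M : ℝ) / N) (hε0 : 0 < ε) (hε1 : ε < 1 - p) :
    prHyp N M n (fun i => p + ε ≤ (i : ℝ) / n) ≤ Real.exp (n * g ε p) := by
  have hN : 0 < N := lt_of_lt_of_le hn hnN
  have hN' : (0 : ℝ) < N := by exact_mod_cast hN
  have hn' : (0 : ℝ) < n := by exact_mod_cast hn
  rcases Nat.eq_zero_or_pos M with hM0 | hMpos
  · -- M = 0 : the probability is 0
    have hp0 : p = 0 := by rw [hp, hM0]; simp
    have : prHyp N M n (fun i => p + ε ≤ (i : ℝ) / n) = 0 := by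
      rw [prHyp]
      apply Finset.sum_eq_zero
      intro i hi
      rcases i with _ | i
      · rw [if_neg]
        simp only [Nat.cast_zero, zero_div, hp0, zero_add]
        linarith
      · rw [hM0]
        simp [Nat.choose]
    rw [this]
    positivity
  · -- main case : 0 < p
    have hp0 : 0 < p := by rw [hp]; positivity
    have hpε1 : p + ε < 1 := by linarith
    have h1pε : 0 < 1 - p - ε := by linarith
    have h1p : 0 < 1 - p := by linarith
    have hpε : 0 < p + ε := by linarith
    set t : ℝ := (p + ε) * (1 - p) / (p * (1 - p - ε)) with htdef
    have ht1 : 1 < t := by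
      rw [htdef, lt_div_iff₀ (by positivity)]
      nlinarith
    have ht0 : 0 < t := lt_trans one_pos ht1
    set s : ℝ := t - 1 with hsdef
    have hs : 0 ≤ s := by simp [hsdef]; linarith
    have hkey : 1 + p * s = (1 - p) / (1 - p - ε) := by
      rw [hsdef, htdef]
      field_simp
      ring
    have hkey0 : 0 < 1 + p * s := by rw [hkey]; positivity
    set A : ℝ := t ^ ((n : ℝ) * (p + ε)) with hAdef
    have hA : 0 < A := Real.rpow_pos_of_pos ht0 _
    have hC : (0 : ℝ) < (N.choose n : ℝ) := by
      exact_mod_cast Nat.choose_pos hnN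
    -- Chernoff step
    have step1 : prHyp N M n (fun i => p + ε ≤ (i : ℝ) / n)
        ≤ (∑ k ∈ range (n + 1),
            (M.choose k : ℝ) * ((N - M).choose (n - k) : ℝ) * (1 + s) ^ k)
          / ((N.choose n : ℝ) * A) := by
      rw [prHyp, Finset.sum_div]
      refine Finset.sum_le_sum fun i hi => ?_
      have hnum : (0 : ℝ) ≤ (M.choose i : ℝ) * ((N - M).choose (n - i) : ℝ) := by positivity
      by_cases hPi : p + ε ≤ (i : ℝ) / n
      · rw [if_pos hPi]
        have hni : (n : ℝ) * (p + ε) ≤ (i : ℝ) := by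
          rw [le_div_iff₀ hn'] at hPi; linarith
        have hiA : A ≤ (1 + s) ^ i := by
          have : (1 : ℝ) + s = t := by rw [hsdef]; ring
          rw [this, hAdef, ← Real.rpow_natCast t i]
          exact Real.rpow_le_rpow_of_exponent_le (le_of_lt ht1) hni
        rw [div_le_div_iff₀ hC (by positivity)]
        calc (M.choose i : ℝ) * ((N - M).choose (n - i) : ℝ) * ((N.choose n : ℝ) * A)
            = ((M.choose i : ℝ) * ((N - M).choose (n - i) : ℝ) * A) * (N.choose n : ℝ) := by
              ring
          _ ≤ ((M.choose i : ℝ) * ((N - M).choose (n - i) : ℝ) * (1 + s) ^ i)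
              * (N.choose n : ℝ) := by gcongr
          _ = (M.choose i : ℝ) * ((N - M).choose (n - i) : ℝ) * (1 + s) ^ i
              * (N.choose n : ℝ) := by ring
      · rw [if_neg hPi]
        positivity
    have step2 : (∑ k ∈ range (n + 1),
            (M.choose k : ℝ) * ((N - M).choose (n - k) : ℝ) * (1 + s) ^ k)
          / ((N.choose n : ℝ) * A)
        ≤ ((N.choose n : ℝ) * (1 + p * s) ^ n) / ((N.choose n : ℝ) * A) := by
      have hm := mgf_le N M n hM hnN hN s hs
      rw [← hp] at hm
      gcongr
    have step3 : ((N.choose n : ℝ) * (1 + p * s) ^ n) / ((N.choose n : ℝ) * A)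
        = (1 + p * s) ^ n / A := by
      rw [mul_div_mul_left _ _ (ne_of_gt hC)]
    -- final computation
    have hfin : (1 + p * s) ^ n / A = Real.exp ((n : ℝ) * g ε p) := by
      have h1 : (1 + p * s) ^ n = Real.exp ((n : ℝ) * Real.log (1 + p * s)) := by
        rw [← Real.log_pow, Real.exp_log (by positivity)]
      have h2 : A = Real.exp (Real.log t * ((n : ℝ) * (p + ε))) := by
        rw [hAdef, Real.rpow_def_of_pos ht0]
      rw [h1, h2, ← Real.exp_sub]
      congr 1
      have hlt : Real.log t = Real.log (p + ε) + Real.log (1 - p)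
          - (Real.log p + Real.log (1 - p - ε)) := by
        rw [htdef, Real.log_div (by positivity) (by positivity),
          Real.log_mul (ne_of_gt hpε) (ne_of_gt h1p),
          Real.log_mul (ne_of_gt hp0) (ne_of_gt h1pε)]
      rw [hkey, hlt, g, Real.log_div (ne_of_gt hp0) (ne_of_gt hpε),
        Real.log_div (ne_of_gt h1p) (ne_of_gt h1pε)]
      ring
    calc prHyp N M n (fun i => p + ε ≤ (i : ℝ) / n)
        ≤ _ := step1
      _ ≤ _ := step2
      _ = (1 + p * s) ^ n / A := step3
      _ = Real.exp ((n : ℝ) * g ε p) := hfin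
end

section
/- Let ε, δ ∈ (0,1) and let r* be the unique solution of Q(ε, r*) = δ, where Q(ε, r) = (1+ε)^{−r}·exp(εr/(1+ε)) + (1−ε)^{−r}·exp(−εr/(1−ε)). Then max{ (1+ε)·ln(1/δ) / [(1+ε)·ln(1+ε) − ε], (1−ε)·ln(2/δ) / [(1−ε)·ln(1−ε) + ε] } < r* < (1+ε)·ln(2/δ) / [(1+ε)·ln(1+ε) − ε]. -/
noncomputable def Q (ε r : ℝ) : ℝ :=
  (1 + ε) ^ (-r) * Real.exp (ε * r / (1 + ε)) +
    (1 - ε) ^ (-r) * Real.exp (-(ε * r) / (1 - ε))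

lemma aux_hasDerivAt {x : ℝ} (hx0 : 0 < x) (hx1 : x < 1) :
    HasDerivAt (fun y => 2*y - (1-y^2)*(Real.log (1+y) - Real.log (1-y)))
      (2*x*(Real.log (1+x) - Real.log (1-x))) x := by
  have h1 : (1:ℝ)+x ≠ 0 := by linarith
  have h2 : (1:ℝ)-x ≠ 0 := by linarith
  have hl1 : HasDerivAt (fun y : ℝ => Real.log (1+y)) (1/(1+x)) x := by
    have := (Real.hasDerivAt_log h1).comp x ((hasDerivAt_id x).const_add 1)
    simpa [one_div, Function.comp_def] using this
  have hl2 : HasDerivAt (fun y : ℝ => Real.log (1-y)) (-(1/(1-x))) x := by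
    have := (Real.hasDerivAt_log h2).comp x ((hasDerivAt_id x).const_sub 1)
    simpa [one_div, Function.comp_def] using this
  have hL : HasDerivAt (fun y : ℝ => Real.log (1+y) - Real.log (1-y))
      (1/(1+x) + 1/(1-x)) x := by
    simpa [sub_neg_eq_add, Pi.sub_def] using hl1.sub hl2
  have hP : HasDerivAt (fun y : ℝ => 1 - y^2) (-(2*x)) x := by
    simpa using (hasDerivAt_pow 2 x).const_sub 1
  have hprod := hP.mul hL
  have hg := ((hasDerivAt_id x).const_mul 2).sub hprod
  have hg' : HasDerivAt (fun y => 2*y - (1-y^2)*(Real.log (1+y) - Real.log (1-y))) _ x := hg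
  convert hg' using 1
  field_simp
  ring

lemma aux_key {ε : ℝ} (h0 : 0 < ε) (h1 : ε < 1) :
    (1 - ε^2) * (Real.log (1+ε) - Real.log (1-ε)) < 2*ε := by
  set g : ℝ → ℝ := fun x => 2*x - (1-x^2)*(Real.log (1+x) - Real.log (1-x)) with hgdef
  have mono : StrictMonoOn g (Set.Icc 0 ε) := by
    apply strictMonoOn_of_deriv_pos (convex_Icc 0 ε)
    · apply ContinuousOn.sub
      · exact (continuous_const.mul continuous_id).continuousOn
      · apply ContinuousOn.mul
        · exact (continuous_const.sub (continuous_pow 2)).continuousOn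
        · apply ContinuousOn.sub
          · apply ContinuousOn.log
            · exact (continuous_const.add continuous_id).continuousOn
            · intro x hx; simp only [Set.mem_Icc] at hx; intro h; linarith [hx.1]
          · apply ContinuousOn.log
            · exact (continuous_const.sub continuous_id).continuousOn
            · intro x hx; simp only [Set.mem_Icc] at hx; intro h; linarith [hx.2]
    · intro x hx
      rw [interior_Icc] at hx
      have hx0 := hx.1
      have hx1 : x < 1 := lt_trans hx.2 h1
      rw [(aux_hasDerivAt hx0 hx1).deriv]
      have hlog1 : 0 < Real.log (1+x) := Real.log_pos (by linarith)
      have hlog2 : Real.log (1-x) < 0 := Real.log_neg (by linarith) (by linarith)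
      have : 0 < Real.log (1+x) - Real.log (1-x) := by linarith
      positivity
  have h := mono (Set.left_mem_Icc.mpr (le_of_lt h0)) (Set.right_mem_Icc.mpr (le_of_lt h0)) h0
  have hg0 : g 0 = 0 := by simp [hgdef]
  rw [hg0] at h
  simp only [hgdef] at h
  linarith

theorem stmt_12 (ε δ rstar : ℝ) (hε0 : 0 < ε) (hε1 : ε < 1) (hδ0 : 0 < δ) (hδ1 : δ < 1)
    (hr : 0 < rstar) (hQ : Q ε rstar = δ) :
    max ((1 + ε) * Real.log (1 / δ) / ((1 + ε) * Real.log (1 + ε) - ε))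
        ((1 - ε) * Real.log (2 / δ) / ((1 - ε) * Real.log (1 - ε) + ε)) < rstar ∧
    rstar < (1 + ε) * Real.log (2 / δ) / ((1 + ε) * Real.log (1 + ε) - ε) := by
  have h1p : (0:ℝ) < 1 + ε := by linarith
  have h1m : (0:ℝ) < 1 - ε := by linarith
  set a' : ℝ := (1 + ε) * Real.log (1 + ε) - ε with ha'def
  set b' : ℝ := (1 - ε) * Real.log (1 - ε) + ε with hb'def
  -- positivity of a'
  have ha' : 0 < a' := by
    have ht : ε / (1 + ε) < Real.log (1 + ε) := by
      rw [Real.lt_log_iff_exp_lt h1p]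
      have h := Real.add_one_lt_exp (x := -(ε/(1+ε))) (by
        intro h
        have : ε / (1+ε) = 0 := by linarith [neg_eq_zero.mp h]
        have := (div_eq_zero_iff.mp this)
        rcases this with h' | h'
        · linarith
        · linarith)
      rw [Real.exp_neg] at h
      have hpos : (0:ℝ) < 1 + -(ε/(1+ε)) := by
        have : ε / (1+ε) < 1 := by
          rw [div_lt_one h1p]; linarith
        linarith
      have hinv : Real.exp (ε/(1+ε)) < (1 + -(ε/(1+ε)))⁻¹ := by
        rw [lt_inv_comm₀ (Real.exp_pos _) hpos]
        linarith
      have heq : (1 + -(ε/(1+ε)))⁻¹ = 1 + ε := by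
        field_simp
        ring
      rw [heq] at hinv
      exact hinv
    rw [ha'def]
    have : ε < (1+ε) * Real.log (1+ε) := by
      calc ε = (1+ε) * (ε / (1+ε)) := by field_simp
        _ < (1+ε) * Real.log (1+ε) := by
          exact mul_lt_mul_of_pos_left ht h1p
    linarith
  -- positivity of b'
  have hb' : 0 < b' := by
    have ht : -(ε / (1 - ε)) < Real.log (1 - ε) := by
      rw [Real.lt_log_iff_exp_lt h1m]
      have h := Real.add_one_lt_exp (x := ε/(1-ε)) (by positivity)
      rw [Real.exp_neg]
      rw [inv_lt_comm₀ (Real.exp_pos _) h1m] at *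
      · calc (1-ε)⁻¹ = 1 + ε/(1-ε) := by field_simp; ring
          _ < Real.exp (ε/(1-ε)) := by linarith
    rw [hb'def]
    have : -ε < (1-ε) * Real.log (1-ε) := by
      calc -ε = (1-ε) * (-(ε / (1-ε))) := by field_simp
        _ < (1-ε) * Real.log (1-ε) := mul_lt_mul_of_pos_left ht h1m
    linarith
  -- a'/(1+ε) < b'/(1-ε)
  have hab : a' / (1+ε) < b' / (1-ε) := by
    rw [div_lt_div_iff₀ h1p h1m]
    have hk := aux_key hε0 hε1
    nlinarith [hk]
  -- rewrite Q
  set u : ℝ := rstar * a' / (1 + ε) with hudef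
  set v : ℝ := rstar * b' / (1 - ε) with hvdef
  have e1 : (1 + ε) ^ (-rstar) * Real.exp (ε * rstar / (1 + ε)) = Real.exp (-u) := by
    rw [Real.rpow_def_of_pos h1p, ← Real.exp_add]
    congr 1
    rw [hudef, ha'def]
    field_simp
    ring
  have e2 : (1 - ε) ^ (-rstar) * Real.exp (-(ε * rstar) / (1 - ε)) = Real.exp (-v) := by
    rw [Real.rpow_def_of_pos h1m, ← Real.exp_add]
    congr 1
    rw [hvdef, hb'def]
    field_simp
    ring
  rw [Q, e1, e2] at hQ
  have huv : u < v := by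
    rw [hudef, hvdef]
    rw [mul_div_assoc, mul_div_assoc]
    exact mul_lt_mul_of_pos_left hab hr
  have hev : Real.exp (-v) < Real.exp (-u) := Real.exp_lt_exp.mpr (by linarith)
  have hxu : Real.exp (-u) < δ := by
    have := Real.exp_pos (-v); linarith
  have hxu2 : δ / 2 < Real.exp (-u) := by linarith
  have hyv : Real.exp (-v) < δ / 2 := by linarith
  have hlog2δ : Real.log (2/δ) = -Real.log (δ/2) := by
    rw [Real.log_div (by norm_num) (ne_of_gt hδ0), Real.log_div (ne_of_gt hδ0) (by norm_num)]
    ring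
  have hlog1δ : Real.log (1/δ) = -Real.log δ := by
    rw [one_div, Real.log_inv]
  -- u < log(2/δ)
  have hu_ub : u < Real.log (2/δ) := by
    have := (Real.log_lt_log (by positivity) hxu2)
    rw [Real.log_exp] at this
    rw [hlog2δ]; linarith
  -- log(1/δ) < u
  have hu_lb : Real.log (1/δ) < u := by
    have := Real.log_lt_log (Real.exp_pos _) hxu
    rw [Real.log_exp] at this
    rw [hlog1δ]; linarith
  -- log(2/δ) < v
  have hv_lb : Real.log (2/δ) < v := by
    have := Real.log_lt_log (Real.exp_pos _) hyv
    rw [Real.log_exp, Real.log_div (ne_of_gt hδ0) (by norm_num)] at this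
    rw [hlog2δ, Real.log_div (ne_of_gt hδ0) (by norm_num)]
    linarith
  constructor
  · apply max_lt
    · rw [div_lt_iff₀ ha']
      rw [hudef] at hu_lb
      rw [lt_div_iff₀ h1p] at hu_lb
      nlinarith [hu_lb]
    · rw [div_lt_iff₀ hb']
      rw [hvdef] at hv_lb
      rw [lt_div_iff₀ h1m] at hv_lb
      nlinarith [hv_lb]
  · rw [lt_div_iff₀ ha']
    rw [hudef, div_lt_iff₀ h1p] at hu_ub
    nlinarith [hu_ub]
end

section
/- For 0 < ε < 1, the function p ↦ M(p − εp, p) is monotonically decreasing on (0, 1), and lim_{p→0+} M(p − εp, p) = −ln(1−ε) − ε/(1−ε), where M(z, p) = ln(p/z) + (1/z − 1)·ln((1−p)/(1−z)). -/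
noncomputable def Mfun (z p : ℝ) : ℝ :=
  Real.log (p / z) + (1 / z - 1) * Real.log ((1 - p) / (1 - z))

theorem stmt_13 (ε : ℝ) (hε0 : 0 < ε) (hε1 : ε < 1) :
    StrictAntiOn (fun p => Mfun (p - ε * p) p) (Set.Ioo 0 1) ∧
    Filter.Tendsto (fun p => Mfun (p - ε * p) p) (nhdsWithin 0 (Set.Ioi 0))
      (nhds (-Real.log (1 - ε) - ε / (1 - ε))) := by
  set c : ℝ := 1 - ε with hc_def
  have hc0 : 0 < c := by simp only [hc_def]; linarith
  have hc1 : c < 1 := by simp only [hc_def]; linarith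
  set v : ℝ → ℝ := fun p => Real.log (1 - p) - Real.log (1 - c * p) with hv
  set F : ℝ → ℝ := fun p => -Real.log c + ((c * p)⁻¹ - 1) * v p with hF
  -- agreement on Ioo 0 1
  have hEq : ∀ p ∈ Set.Ioo (0:ℝ) 1, Mfun (p - ε * p) p = F p := by
    intro p hp
    obtain ⟨hp0, hp1⟩ := hp
    have hcp : p - ε * p = c * p := by simp only [hc_def]; ring
    have hcp0 : 0 < c * p := mul_pos hc0 hp0
    have h1p : 0 < 1 - p := by linarith
    have h1cp : 0 < 1 - c * p := by nlinarith
    rw [Mfun, hcp, Real.log_div (ne_of_gt hp0) (ne_of_gt hcp0),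
      Real.log_mul (ne_of_gt hc0) (ne_of_gt hp0),
      Real.log_div (ne_of_gt h1p) (ne_of_gt h1cp)]
    simp only [hF, hv]
    have : 1 / (c * p) = (c * p)⁻¹ := one_div _
    rw [this]
    ring
  -- derivative of F on Ioo 0 1
  have hderiv : ∀ x ∈ Set.Ioo (0:ℝ) 1, HasDerivAt F
      ((-c / (c * x) ^ 2) * v x + ((c * x)⁻¹ - 1) * (-1 / (1 - x) - (-c / (1 - c * x)))) x := by
    rintro x ⟨hx0, hx1⟩
    have hcx0 : c * x ≠ 0 := ne_of_gt (mul_pos hc0 hx0)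
    have h1x : (1:ℝ) - x ≠ 0 := by intro h; linarith [(by linarith : (0:ℝ) < 1 - x)]
    have h1cx : (1:ℝ) - c * x ≠ 0 := by nlinarith
    have h1 : HasDerivAt (fun p : ℝ => c * p) c x := by
      simpa using (hasDerivAt_id x).const_mul c
    have hu : HasDerivAt (fun p : ℝ => (c * p)⁻¹ - 1) (-c / (c * x) ^ 2) x :=
      (h1.inv hcx0).sub_const 1
    have hv1 : HasDerivAt (fun p : ℝ => 1 - p) (-1) x := by
      simpa using (hasDerivAt_id x).const_sub 1
    have hv2 : HasDerivAt (fun p : ℝ => Real.log (1 - p)) (-1 / (1 - x)) x := hv1.log h1x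
    have hv3 : HasDerivAt (fun p : ℝ => 1 - c * p) (-c) x := by
      simpa using h1.const_sub 1
    have hv4 : HasDerivAt (fun p : ℝ => Real.log (1 - c * p)) (-c / (1 - c * x)) x :=
      hv3.log h1cx
    have hvd : HasDerivAt v (-1 / (1 - x) - (-c / (1 - c * x))) x := hv2.sub hv4
    exact (hu.mul hvd).const_add (-Real.log c)
  -- the derivative is negative
  have hderivneg : ∀ x ∈ Set.Ioo (0:ℝ) 1, deriv F x < 0 := by
    rintro x hx
    obtain ⟨hx0, hx1⟩ := hx
    have hcx0 : 0 < c * x := mul_pos hc0 hx0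
    have h1x : (0:ℝ) < 1 - x := by linarith
    have h1cx : (0:ℝ) < 1 - c * x := by nlinarith
    rw [(hderiv x ⟨hx0, hx1⟩).deriv]
    -- key log inequality : log(1-cx) - log(1-x) < x(1-c)/(1-x)
    have hratio : (0:ℝ) < (1 - c * x) / (1 - x) := div_pos h1cx h1x
    have hne1 : (1 - c * x) / (1 - x) ≠ 1 := by
      intro h
      have : 1 - c * x = 1 - x := by
        field_simp at h; linarith
      nlinarith
    have hkey := Real.log_lt_sub_one_of_pos hratio hne1
    rw [Real.log_div (ne_of_gt h1cx) (ne_of_gt h1x)] at hkey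
    have hkey2 : Real.log (1 - c * x) - Real.log (1 - x) < x * (1 - c) / (1 - x) := by
      have : (1 - c * x) / (1 - x) - 1 = x * (1 - c) / (1 - x) := by
        field_simp; ring
      linarith [hkey, this.symm ▸ hkey]
    -- rewrite the derivative as a single fraction
    have hrw : (-c / (c * x) ^ 2) * v x + ((c * x)⁻¹ - 1) * (-1 / (1 - x) - (-c / (1 - c * x)))
        = ((Real.log (1 - c * x) - Real.log (1 - x)) - x * (1 - c) / (1 - x)) / (c * x ^ 2) := by
      simp only [hv]
      field_simp
      ring
    rw [hrw]
    apply div_neg_of_neg_of_pos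
    · linarith
    · positivity
  -- continuity of F on Ioo 0 1
  have hcont : ContinuousOn F (Set.Ioo (0:ℝ) 1) :=
    fun x hx => ((hderiv x hx).continuousAt).continuousWithinAt
  constructor
  · have hF_anti : StrictAntiOn F (Set.Ioo (0:ℝ) 1) := by
      apply strictAntiOn_of_deriv_neg (convex_Ioo 0 1) hcont
      intro x hx
      rw [interior_Ioo] at hx
      exact hderivneg x hx
    intro a ha b hb hab
    have := hF_anti ha hb hab
    simpa only [hEq a ha, hEq b hb] using this
  · -- limit part
    have hv0 : v 0 = 0 := by simp [hv]
    have hd0 : HasDerivAt v (-1 - (-c)) 0 := by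
      have h1 : HasDerivAt (fun p : ℝ => c * p) c 0 := by
        simpa using (hasDerivAt_id (0:ℝ)).const_mul c
      have hv1 : HasDerivAt (fun p : ℝ => 1 - p) (-1) (0:ℝ) := by
        simpa using (hasDerivAt_id (0:ℝ)).const_sub 1
      have hv2 : HasDerivAt (fun p : ℝ => Real.log (1 - p)) (-1 / (1 - 0)) (0:ℝ) :=
        hv1.log (by norm_num)
      have hv3 : HasDerivAt (fun p : ℝ => 1 - c * p) (-c) (0:ℝ) := by
        simpa using h1.const_sub 1
      have hv4 : HasDerivAt (fun p : ℝ => Real.log (1 - c * p)) (-c / (1 - c * 0)) (0:ℝ) :=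
        hv3.log (by simp)
      have := hv2.sub hv4
      exact this.congr_deriv (by norm_num)
    have hslope : Filter.Tendsto (fun p => v p / p) (nhdsWithin 0 (Set.Ioi 0))
        (nhds (-1 - (-c))) := by
      have h := hasDerivAt_iff_tendsto_slope.mp hd0
      have h2 : Filter.Tendsto (slope v 0) (nhdsWithin 0 (Set.Ioi 0)) (nhds (-1 - (-c))) :=
        h.mono_left (nhdsWithin_mono _ (fun y hy => ne_of_gt hy))
      refine h2.congr fun p => ?_
      simp [slope_def_field, hv0]
    have hlim2 : Filter.Tendsto (fun p => -Real.log c + (1 - c * p) * (v p / p) / c)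
        (nhdsWithin 0 (Set.Ioi 0)) (nhds (-Real.log c + (1 - c * 0) * (-1 - (-c)) / c)) := by
      apply Filter.Tendsto.const_add
      apply Filter.Tendsto.div_const
      apply Filter.Tendsto.mul _ hslope
      have hcont2 : Filter.Tendsto (fun p : ℝ => 1 - c * p) (nhds 0) (nhds (1 - c * 0)) := by
        exact (continuous_const.sub (continuous_const.mul continuous_id)).tendsto 0
      exact hcont2.mono_left nhdsWithin_le_nhds
    have hval : -Real.log c + (1 - c * 0) * (-1 - (-c)) / c
        = -Real.log (1 - ε) - ε / (1 - ε) := by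
      simp only [hc_def]
      have : (1:ℝ) - ε ≠ 0 := by linarith
      field_simp
      ring
    rw [hval] at hlim2
    refine hlim2.congr' ?_
    have hmem : Set.Ioo (0:ℝ) 1 ∈ nhdsWithin 0 (Set.Ioi 0) :=
      Ioo_mem_nhdsGT_of_mem (by constructor <;> norm_num)
    filter_upwards [hmem] with p hp
    obtain ⟨hp0, hp1⟩ := hp
    rw [hEq p ⟨hp0, hp1⟩]
    simp only [hF]
    have hcp0 : c * p ≠ 0 := ne_of_gt (mul_pos hc0 hp0)
    have hp0' : p ≠ 0 := ne_of_gt hp0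
    field_simp
end

section
/- For 0 < ε < 1, the function p ↦ M(p + εp, p) is monotonically decreasing on (0, 1/(1+ε)), and lim_{p→0+} M(p + εp, p) = −ln(1+ε) + ε/(1+ε), where M(z, p) = ln(p/z) + (1/z − 1)·ln((1−p)/(1−z)). -/
open Filter Set Real Topology

noncomputable def Gaux (ε p : ℝ) : ℝ :=
  -Real.log (1+ε) + (1/((1+ε)*p) - 1) * (Real.log (1-p) - Real.log (1-(1+ε)*p))

lemma hasDerivAt_log_one_sub_mul (c x : ℝ) (h : 1 - c*x ≠ 0) :
    HasDerivAt (fun q : ℝ => Real.log (1 - c*q)) (-c/(1-c*x)) x := by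
  have h0 : HasDerivAt (fun q : ℝ => 1 - c*q) (-c) x := by
    simpa using ((hasDerivAt_id x).const_mul c).const_sub (1:ℝ)
  simpa using h0.log h

lemma hasDerivAt_log_one_sub (x : ℝ) (h : 1 - x ≠ 0) :
    HasDerivAt (fun q : ℝ => Real.log (1 - q)) (-1/(1-x)) x := by
  have := hasDerivAt_log_one_sub_mul 1 x (by simpa using h)
  simpa using this

lemma Gaux_hasDerivAt (ε p : ℝ) (hε0 : 0 < ε) (hp0 : 0 < p) (hcp : (1+ε)*p < 1) :
    HasDerivAt (Gaux ε)
      ((-(1+ε)/((1+ε)*p)^2) * (Real.log (1-p) - Real.log (1-(1+ε)*p))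
        + (1/((1+ε)*p) - 1) * (-1/(1-p) - (-(1+ε))/(1-(1+ε)*p))) p := by
  have hp1 : p < 1 := by nlinarith
  have hcp0 : (1+ε)*p ≠ 0 := by positivity
  have ha : HasDerivAt (fun q : ℝ => 1/((1+ε)*q) - 1) (-(1+ε)/((1+ε)*p)^2) p := by
    have h0 : HasDerivAt (fun q : ℝ => (1+ε)*q) (1+ε) p := by
      simpa using (hasDerivAt_id p).const_mul (1+ε)
    have := (h0.inv hcp0).sub_const 1
    simpa [one_div] using this
  have hl1 := hasDerivAt_log_one_sub p (by linarith)
  have hl2 := hasDerivAt_log_one_sub_mul (1+ε) p (by linarith)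
  have := (hasDerivAt_const p (-Real.log (1+ε))).add (ha.mul (hl1.sub hl2))
  unfold Gaux
  exact this.congr_deriv (by simp)

lemma key_log (ε p : ℝ) (hε0 : 0 < ε) (hp0 : 0 < p) (hcp : (1+ε)*p < 1) :
    ε*p/(1-p) < Real.log (1-p) - Real.log (1-(1+ε)*p) := by
  have hp1 : p < 1 := by nlinarith
  have h1p : (0:ℝ) < 1 - p := by linarith
  have h1cp : (0:ℝ) < 1 - (1+ε)*p := by linarith
  set x : ℝ := (1-(1+ε)*p)/(1-p) with hx
  have hx0 : 0 < x := by positivity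
  have hx1 : x ≠ 1 := by
    have : x < 1 := by
      rw [hx, div_lt_one h1p]
      nlinarith
    exact ne_of_lt this
  have hlog := Real.log_lt_sub_one_of_pos hx0 hx1
  have hlx : Real.log x = Real.log (1-(1+ε)*p) - Real.log (1-p) :=
    Real.log_div (by linarith) (by linarith)
  have hxe : x - 1 = -(ε*p/(1-p)) := by
    rw [hx]; field_simp; ring
  rw [hlx, hxe] at hlog
  linarith

lemma Gaux_anti (ε : ℝ) (hε0 : 0 < ε) :
    StrictAntiOn (Gaux ε) (Set.Ioo 0 (1 / (1 + ε))) := by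
  have hc : (0:ℝ) < 1 + ε := by linarith
  have hfacts : ∀ p ∈ Set.Ioo (0:ℝ) (1/(1+ε)), 0 < p ∧ (1+ε)*p < 1 := by
    rintro p ⟨hp0, hp1⟩
    have h1 : p * (1+ε) < 1 := (lt_div_iff₀ hc).mp hp1
    exact ⟨hp0, by nlinarith⟩
  apply strictAntiOn_of_deriv_neg (convex_Ioo _ _)
  · intro p hp
    obtain ⟨hp0, hcp⟩ := hfacts p hp
    exact (Gaux_hasDerivAt ε p hε0 hp0 hcp).continuousAt.continuousWithinAt
  · intro p hp
    rw [interior_Ioo] at hp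
    obtain ⟨hp0, hcp⟩ := hfacts p hp
    have hp1 : p < 1 := by nlinarith
    rw [(Gaux_hasDerivAt ε p hε0 hp0 hcp).deriv]
    set L : ℝ := Real.log (1-p) - Real.log (1-(1+ε)*p) with hL
    have hkey := key_log ε p hε0 hp0 hcp
    have hD : (-(1+ε)/((1+ε)*p)^2) * L
        + (1/((1+ε)*p) - 1) * (-1/(1-p) - (-(1+ε))/(1-(1+ε)*p))
        = (ε*p/(1-p) - L) / ((1+ε)*p^2) := by
      have h1p : (1:ℝ) - p ≠ 0 := by linarith
      have h1cp : (1:ℝ) - (1+ε)*p ≠ 0 := by linarith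
      have hpne : p ≠ 0 := ne_of_gt hp0
      have hcne : (1:ℝ)+ε ≠ 0 := by linarith
      rw [eq_div_iff (by positivity)]
      field_simp
      ring
    rw [hD]
    apply div_neg_of_neg_of_pos (by linarith) (by positivity)

lemma Gaux_tendsto (ε : ℝ) (hε0 : 0 < ε) :
    Tendsto (Gaux ε) (𝓝[>] (0:ℝ)) (𝓝 (-Real.log (1 + ε) + ε / (1 + ε))) := by
  have hc : (0:ℝ) < 1 + ε := by linarith
  set L : ℝ → ℝ := fun p => Real.log (1-p) - Real.log (1-(1+ε)*p) with hLdef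
  have hL0 : L 0 = 0 := by simp [hLdef]
  have hLd : HasDerivAt L ε 0 := by
    have h1 := hasDerivAt_log_one_sub 0 (by norm_num)
    have h2 := hasDerivAt_log_one_sub_mul (1+ε) 0 (by norm_num)
    have := h1.sub h2
    rw [hLdef]
    exact this.congr_deriv (by norm_num)
  have hslope : Tendsto (fun p => L p / p) (𝓝[>] (0:ℝ)) (𝓝 ε) := by
    have h := hasDerivAt_iff_tendsto_slope.mp hLd
    have h2 := h.mono_left (nhdsWithin_mono 0 (fun x hx => ne_of_gt hx))
    refine h2.congr fun p => ?_
    simp [slope_def_field, hL0]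
  have hA : Tendsto (fun p => L p / ((1+ε)*p)) (𝓝[>] (0:ℝ)) (𝓝 (ε/(1+ε))) := by
    have := hslope.div_const (1+ε)
    refine this.congr fun p => ?_
    rw [div_div, mul_comm]
  have hB : Tendsto L (𝓝[>] (0:ℝ)) (𝓝 0) := by
    have hcont : ContinuousAt L 0 := by
      apply ContinuousAt.sub
      · exact (Real.continuousAt_log (by norm_num)).comp
          ((continuous_const.sub continuous_id).continuousAt)
      · exact (Real.continuousAt_log (by norm_num)).comp
          ((continuous_const.sub (continuous_const.mul continuous_id)).continuousAt)
    have h2 : Tendsto L (𝓝[>] (0:ℝ)) (𝓝 (L 0)) :=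
      hcont.tendsto.mono_left (nhdsWithin_le_nhds (s := Set.Ioi 0))
    rwa [hL0] at h2
  have hmain : Tendsto (fun p => -Real.log (1+ε) + (L p / ((1+ε)*p) - L p))
      (𝓝[>] (0:ℝ)) (𝓝 (-Real.log (1+ε) + (ε/(1+ε) - 0))) :=
    tendsto_const_nhds.add (hA.sub hB)
  rw [sub_zero] at hmain
  refine hmain.congr fun p => ?_
  simp only [Gaux, hLdef]
  ring

theorem stmt_14 (ε : ℝ) (hε0 : 0 < ε) (hε1 : ε < 1) :
    StrictAntiOn (fun p => Mfun (p + ε * p) p) (Set.Ioo 0 (1 / (1 + ε))) ∧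
    Filter.Tendsto (fun p => Mfun (p + ε * p) p) (nhdsWithin 0 (Set.Ioi 0))
      (nhds (-Real.log (1 + ε) + ε / (1 + ε))) := by
  have hc : (0:ℝ) < 1 + ε := by linarith
  have hEq : ∀ p ∈ Set.Ioo (0:ℝ) (1/(1+ε)), Mfun (p + ε*p) p = Gaux ε p := by
    rintro p ⟨hp0, hp1⟩
    have h1 : p * (1+ε) < 1 := (lt_div_iff₀ hc).mp hp1
    have hcp : (1+ε)*p < 1 := by nlinarith
    have hp1' : p < 1 := by nlinarith
    have hpe : p + ε*p = (1+ε)*p := by ring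
    have hq : p / ((1+ε)*p) = 1/(1+ε) := by
      rw [mul_comm, ← div_div, div_self (ne_of_gt hp0)]
    unfold Mfun Gaux
    rw [hpe, hq, one_div, Real.log_inv, Real.log_div (by linarith) (by linarith),
      one_div]
  constructor
  · intro a ha b hb hab
    simp only
    rw [hEq a ha, hEq b hb]
    exact Gaux_anti ε hε0 ha hb hab
  · have hmem : Set.Ioo (0:ℝ) (1/(1+ε)) ∈ 𝓝[>] (0:ℝ) :=
      Ioo_mem_nhdsGT_of_mem ⟨le_refl _, by positivity⟩
    refine (Gaux_tendsto ε hε0).congr' ?_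
    filter_upwards [hmem] with p hp
    exact (hEq p hp).symm
end

section
/- Consider inverse sampling without replacement from a population of N units with M marked units (1 ≤ r ≤ M < N, p = M/N): sampling continues until r marked units are found or all N units are drawn; let n denote the random sample size at termination. Then for ε ∈ (0,1), Pr{ r/n ≤ (1−ε)·p } ≤ (1−ε)^{−r}·exp(−εr/(1−ε)). -/
open scoped Classical

/-- Uniform probability over draw orders (permutations of the `N` population units)
of an event `E`. -/
noncomputable def Pr (N : ℕ) (E : Equiv.Perm (Fin N) → Prop) : ℝ :=
  ((Finset.univ.filter E).card : ℝ) / (Nat.factorial N : ℝ)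

/-- Number of marked units (units with index `< M`) among the first `m` draws,
when the units are drawn without replacement in the order given by `σ`. -/
def drawCount (N M : ℕ) (σ : Equiv.Perm (Fin N)) (m : ℕ) : ℕ :=
  (Finset.univ.filter (fun i : Fin N => (i : ℕ) < m ∧ ((σ i : ℕ) < M))).card

/-- Inverse sampling: sample size when sampling stops, i.e. the first time `r` marked
units have been found, or `N` if the whole population is examined first. -/
noncomputable def stopTime (N M r : ℕ) (σ : Equiv.Perm (Fin N)) : ℕ :=
  sInf {m | drawCount N M σ m = r ∨ m = N}

noncomputable def Hfun (z p : ℝ) : ℝ :=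
  z * (Real.log (p / z) + (1 / z - 1) * Real.log ((1 - p) / (1 - z)))

lemma drawCount_zero (N M : ℕ) (σ : Equiv.Perm (Fin N)) : drawCount N M σ 0 = 0 := by
  simp [drawCount]

lemma drawCount_succ_le (N M : ℕ) (σ : Equiv.Perm (Fin N)) (k : ℕ) :
    drawCount N M σ (k+1) ≤ drawCount N M σ k + 1 := by
  unfold drawCount
  have hsub : Finset.univ.filter (fun i : Fin N => (i:ℕ) < k+1 ∧ ((σ i:ℕ) < M)) ⊆
      Finset.univ.filter (fun i : Fin N => (i:ℕ) < k ∧ ((σ i:ℕ) < M)) ∪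
      Finset.univ.filter (fun i : Fin N => (i:ℕ) = k) := by
    intro i hi
    simp only [Finset.mem_filter, Finset.mem_union, Finset.mem_univ, true_and] at *
    omega
  have hone : (Finset.univ.filter (fun i : Fin N => (i:ℕ) = k)).card ≤ 1 := by
    apply Finset.card_le_one.mpr
    intro a ha b hb
    simp only [Finset.mem_filter, Finset.mem_univ, true_and] at ha hb
    exact Fin.ext (by omega)
  calc (Finset.univ.filter (fun i : Fin N => (i:ℕ) < k+1 ∧ ((σ i:ℕ) < M))).card
      ≤ _ := Finset.card_le_card hsub
    _ ≤ _ := Finset.card_union_le _ _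
    _ ≤ (Finset.univ.filter (fun i : Fin N => (i:ℕ) < k ∧ ((σ i:ℕ) < M))).card + 1 := by omega

lemma stopTime_le (N M r : ℕ) (σ : Equiv.Perm (Fin N)) : stopTime N M r σ ≤ N :=
  Nat.sInf_le (Or.inr rfl)

lemma drawCount_lt_of_lt_stopTime (N M r : ℕ) (σ : Equiv.Perm (Fin N)) (hr : 1 ≤ r) :
    ∀ k, k < stopTime N M r σ → drawCount N M σ k < r := by
  intro k
  induction k with
  | zero => intro _; rw [drawCount_zero]; omega
  | succ k ih =>
    intro hk
    have h1 : drawCount N M σ k < r := ih (lt_trans (Nat.lt_succ_self k) hk)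
    have h2 := drawCount_succ_le N M σ k
    have h3 : k+1 ∉ {m | drawCount N M σ m = r ∨ m = N} := Nat.notMem_of_lt_sInf hk
    have h4 : drawCount N M σ (k+1) ≠ r := fun h => h3 (Or.inl h)
    omega

lemma drawCount_le_of_le_stopTime (N M r : ℕ) (σ : Equiv.Perm (Fin N)) (hr : 1 ≤ r) {m : ℕ}
    (h : m ≤ stopTime N M r σ) : drawCount N M σ m ≤ r := by
  cases m with
  | zero => simp [drawCount_zero]
  | succ k =>
    have h1 : drawCount N M σ k < r :=
      drawCount_lt_of_lt_stopTime N M r σ hr k (lt_of_lt_of_le (Nat.lt_succ_self k) h)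
    have h2 := drawCount_succ_le N M σ k
    omega

lemma stopTime_pos (N M r : ℕ) (σ : Equiv.Perm (Fin N)) (hr : 1 ≤ r) (hN : 0 < N) :
    0 < stopTime N M r σ := by
  rcases Nat.eq_zero_or_pos (stopTime N M r σ) with h | h
  · exfalso
    have hmem : stopTime N M r σ ∈ {m | drawCount N M σ m = r ∨ m = N} :=
      Nat.sInf_mem ⟨N, Or.inr rfl⟩
    rw [h] at hmem
    rcases hmem with h1 | h1
    · rw [drawCount_zero] at h1; omega
    · omega
  · exact h

lemma Pr_nonneg (N : ℕ) (E : Equiv.Perm (Fin N) → Prop) : 0 ≤ Pr N E :=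
  div_nonneg (by positivity) (by positivity)

lemma Pr_mono (N : ℕ) {E F : Equiv.Perm (Fin N) → Prop} (h : ∀ σ, E σ → F σ) :
    Pr N E ≤ Pr N F := by
  unfold Pr
  have hc : (Finset.univ.filter E).card ≤ (Finset.univ.filter F).card := by
    apply Finset.card_le_card
    intro σ hσ
    simp only [Finset.mem_filter, Finset.mem_univ, true_and] at *
    exact h σ hσ
  gcongr

lemma Pr_zero (N : ℕ) {E : Equiv.Perm (Fin N) → Prop} (h : ∀ σ, ¬ E σ) : Pr N E = 0 := by
  unfold Pr
  rw [Finset.filter_false_of_mem (fun σ _ => h σ)]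
  simp

lemma analytic (r m : ℕ) (ε p : ℝ) (hε0 : 0 < ε) (hε1 : ε < 1)
    (hp0 : 0 < p) (hp1 : p < 1) (hr : (0:ℝ) < r)
    (hm0 : (r:ℝ)/((1-ε)*p) ≤ (m:ℝ)) :
    Real.exp ((m:ℝ) * Hfun ((r:ℝ)/m) p) ≤ (1-ε) ^ (-(r:ℝ)) * Real.exp (-(ε*r)/(1-ε)) := by
  have hq : 0 < 1 - ε := by linarith
  have hqp : 0 < (1-ε)*p := by positivity
  have hqp1 : (1-ε)*p < 1 := by nlinarith
  set R := (r:ℝ) with hRdef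
  set A := (m:ℝ) with hAdef
  clear_value R A
  clear hRdef hAdef
  have hmR : R ≤ A * ((1-ε)*p) := (div_le_iff₀ hqp).mp hm0
  have hA : 0 < A := lt_of_lt_of_le (by positivity) hm0
  have hRA : R < A := by nlinarith
  have ht0 : 0 < R/A := by positivity
  have htqp : R/A ≤ (1-ε)*p := by rw [div_le_iff₀ hA]; nlinarith
  have htp : R/A < p := lt_of_le_of_lt htqp (by nlinarith)
  have ht1 : R/A < 1 := lt_trans htp hp1
  have hexp : A * Hfun (R/A) p = R * Real.log (p/(R/A)) + (A - R) * Real.log ((1-p)/(1-R/A)) := by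
    unfold Hfun
    field_simp
  have hb1 : (A - R) * Real.log ((1-p)/(1-R/A)) ≤ R - A * p := by
    have hpos : (0:ℝ) < (1-p)/(1-R/A) := by
      apply div_pos <;> linarith
    have h1 : (A - R) * Real.log ((1-p)/(1-R/A)) ≤ (A - R) * ((1-p)/(1-R/A) - 1) :=
      mul_le_mul_of_nonneg_left (Real.log_le_sub_one_of_pos hpos) (by linarith)
    have h2 : (A - R) * ((1-p)/(1-R/A) - 1) = R - A * p := by
      field_simp [sub_ne_zero.mpr hRA.ne', hA.ne']
      ring
    linarith
  have hb2 : R * Real.log (p/(R/A)) ≤ R * (- Real.log (1-ε)) + ((1-ε)*p*A - R) := by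
    have key : p/(R/A) = (1/(1-ε)) * ((1-ε)*p*A/R) := by field_simp
    have hlog : Real.log (1/(1-ε)) = - Real.log (1-ε) := by
      rw [one_div, Real.log_inv]
    rw [key, Real.log_mul (by positivity) (by positivity), hlog]
    have h3 : Real.log ((1-ε)*p*A/R) ≤ (1-ε)*p*A/R - 1 :=
      Real.log_le_sub_one_of_pos (by positivity)
    have h4 : R * ((1-ε)*p*A/R - 1) = (1-ε)*p*A - R := by field_simp
    nlinarith [h3]
  have hsum : A * Hfun (R/A) p ≤ Real.log (1-ε) * (-R) - ε*(A*p) := by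
    rw [hexp]
    nlinarith [hb1, hb2]
  have hAp : R/(1-ε) ≤ A * p := by
    rw [div_le_iff₀ hq]; nlinarith
  have h6 : ε*(R/(1-ε)) ≤ ε*(A*p) := mul_le_mul_of_nonneg_left hAp hε0.le
  have hfinal : A * Hfun (R/A) p ≤ Real.log (1-ε) * (-R) + (-(ε*R)/(1-ε)) := by
    have h5 : -(ε*R)/(1-ε) = -(ε*(R/(1-ε))) := by ring
    rw [h5]
    linarith
  calc Real.exp (A * Hfun (R/A) p) ≤ Real.exp (Real.log (1-ε) * (-R) + (-(ε*R)/(1-ε))) :=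
        Real.exp_le_exp.mpr hfinal
    _ = (1-ε) ^ (-R) * Real.exp (-(ε*R)/(1-ε)) := by
        rw [Real.exp_add, Real.rpow_def_of_pos hq]

theorem stmt_15 (N M r : ℕ) (hr : 1 ≤ r) (hrM : r ≤ M) (hMN : M < N)
    (ε p : ℝ) (hp : p = (M : ℝ) / N) (hε0 : 0 < ε) (hε1 : ε < 1)
    -- Hoeffding's inequality for sampling without replacement (assumed):
    (hHoeff : ∀ m : ℕ, 1 ≤ m → m ≤ N → ∀ t : ℝ, 0 < t → t < p →
      Pr N (fun σ => (drawCount N M σ m : ℝ) / m ≤ t) ≤ Real.exp (m * Hfun t p)) :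
    Pr N (fun σ => (r : ℝ) / (stopTime N M r σ) ≤ (1 - ε) * p) ≤
      (1 - ε) ^ (-(r : ℝ)) * Real.exp (-(ε * r) / (1 - ε)) := by
  have hN : 0 < N := by omega
  have hNR : (0:ℝ) < (N:ℝ) := by exact_mod_cast hN
  have hp0 : 0 < p := by
    rw [hp]; apply div_pos _ hNR; exact_mod_cast (by omega : 0 < M)
  have hp1 : p < 1 := by
    rw [hp, div_lt_one hNR]; exact_mod_cast hMN
  have hq : 0 < 1 - ε := by linarith
  have hqp : 0 < (1-ε)*p := by positivity
  have hrpos : (0:ℝ) < (r:ℝ) := by exact_mod_cast hr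
  set m0 : ℝ := (r:ℝ)/((1-ε)*p) with hm0def
  have hm0pos : 0 < m0 := by positivity
  set m : ℕ := ⌈m0⌉₊ with hmdef
  have hm0m : m0 ≤ (m:ℝ) := Nat.le_ceil m0
  have hm1 : 1 ≤ m := by
    have h : (0:ℝ) < (m:ℝ) := lt_of_lt_of_le hm0pos hm0m
    have : 0 < m := by exact_mod_cast h
    omega
  -- key step: on the event, m ≤ stopTime
  have hstep : ∀ σ : Equiv.Perm (Fin N), ((r:ℝ)/(stopTime N M r σ) ≤ (1-ε)*p) →
      m ≤ stopTime N M r σ := by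
    intro σ hσ
    have hn : 0 < stopTime N M r σ := stopTime_pos N M r σ hr hN
    have hnR : (0:ℝ) < (stopTime N M r σ : ℝ) := by exact_mod_cast hn
    have h1 : m0 ≤ (stopTime N M r σ : ℝ) := by
      rw [hm0def, div_le_iff₀ hqp]
      rw [div_le_iff₀ hnR] at hσ
      linarith [mul_le_mul_of_nonneg_right hσ (le_of_lt hqp), hσ]
    exact Nat.ceil_le.mpr h1
  by_cases hmN : m ≤ N
  · have hincl : ∀ σ : Equiv.Perm (Fin N), ((r:ℝ)/(stopTime N M r σ) ≤ (1-ε)*p) →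
        ((drawCount N M σ m : ℝ)/m ≤ (r:ℝ)/m) := by
      intro σ hσ
      have h3 : drawCount N M σ m ≤ r := drawCount_le_of_le_stopTime N M r σ hr (hstep σ hσ)
      have hmR : (0:ℝ) < (m:ℝ) := by exact_mod_cast hm1
      gcongr
    have ht0 : (0:ℝ) < (r:ℝ)/m := by
      have hmR : (0:ℝ) < (m:ℝ) := by exact_mod_cast hm1
      positivity
    have htp : (r:ℝ)/m < p := by
      have hmR : (0:ℝ) < (m:ℝ) := by exact_mod_cast hm1
      have h1 : (r:ℝ)/m ≤ (1-ε)*p := by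
        rw [div_le_iff₀ hmR]
        have := (div_le_iff₀ hqp).mp hm0m
        linarith
      nlinarith
    calc Pr N (fun σ => (r:ℝ)/(stopTime N M r σ) ≤ (1-ε)*p)
        ≤ Pr N (fun σ => (drawCount N M σ m : ℝ)/m ≤ (r:ℝ)/m) := Pr_mono N hincl
      _ ≤ Real.exp ((m:ℝ) * Hfun ((r:ℝ)/m) p) := hHoeff m hm1 hmN ((r:ℝ)/m) ht0 htp
      _ ≤ (1-ε) ^ (-(r:ℝ)) * Real.exp (-(ε*(r:ℝ))/(1-ε)) :=
          analytic r m ε p hε0 hε1 hp0 hp1 hrpos hm0m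
  · have hempty : ∀ σ : Equiv.Perm (Fin N), ¬((r:ℝ)/(stopTime N M r σ) ≤ (1-ε)*p) := by
      intro σ hσ
      have h1 := hstep σ hσ
      have h2 := stopTime_le N M r σ
      omega
    rw [Pr_zero N hempty]
    exact mul_nonneg (Real.rpow_nonneg hq.le _) (Real.exp_nonneg _)
end

section
/- Let ε, δ ∈ (0,1). If r > (1+ε)·ln(2/δ) / [(1+ε)·ln(1+ε) − ε], then (1+ε)^{−r}·exp(εr/(1+ε)) + (1−ε)^{−r}·exp(−εr/(1−ε)) < δ; consequently, in the inverse sampling scheme the estimator p̃ satisfies Pr{ |p̃ − p| < ε·p } > 1 − δ. -/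
open scoped Classical

/-- The inverse-sampling estimator `p̃ = k / n`. -/
noncomputable def pTilde (N M r : ℕ) (σ : Equiv.Perm (Fin N)) : ℝ :=
  (drawCount N M σ (stopTime N M r σ) : ℝ) / (stopTime N M r σ)

lemma key_ineq {x : ℝ} (hx0 : 0 ≤ x) (hx1 : x < 1) :
    Real.log (1 + x) - x / (1 + x) ≤ x / (1 - x) + Real.log (1 - x) := by
  set f : ℝ → ℝ := fun y => y / (1 - y) + Real.log (1 - y) - Real.log (1 + y) + y / (1 + y)
    with hf
  have hderiv : ∀ y ∈ Set.Ico (0:ℝ) 1, HasDerivAt f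
      (1 / (1 - y) ^ 2 + (-1) / (1 - y) - 1 / (1 + y) + 1 / (1 + y) ^ 2) y := by
    intro y hy
    obtain ⟨hy0, hy1⟩ := hy
    have h1 : (1 : ℝ) - y ≠ 0 := by linarith
    have h2 : (1 : ℝ) + y ≠ 0 := by linarith
    have d1 : HasDerivAt (fun y : ℝ => y / (1 - y)) ((1 * (1 - y) - y * (0 - 1)) / (1 - y) ^ 2) y :=
      (hasDerivAt_id y).div ((hasDerivAt_const y 1).sub (hasDerivAt_id y)) h1
    have d2 : HasDerivAt (fun y : ℝ => Real.log (1 - y)) ((0 - 1) / (1 - y)) y :=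
      ((hasDerivAt_const y 1).sub (hasDerivAt_id y)).log h1
    have d3 : HasDerivAt (fun y : ℝ => Real.log (1 + y)) ((0 + 1) / (1 + y)) y :=
      ((hasDerivAt_const y 1).add (hasDerivAt_id y)).log h2
    have d4 : HasDerivAt (fun y : ℝ => y / (1 + y)) ((1 * (1 + y) - y * (0 + 1)) / (1 + y) ^ 2) y :=
      (hasDerivAt_id y).div ((hasDerivAt_const y 1).add (hasDerivAt_id y)) h2
    have := ((d1.add d2).sub d3).add d4
    exact this.congr_deriv (by ring)
  have hmono : MonotoneOn f (Set.Icc 0 x) := by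
    apply monotoneOn_of_deriv_nonneg (convex_Icc 0 x)
    · intro y hy
      exact ((hderiv y ⟨hy.1, lt_of_le_of_lt hy.2 hx1⟩).continuousAt).continuousWithinAt
    · intro y hy
      rw [interior_Icc] at hy
      exact ((hderiv y ⟨le_of_lt hy.1, lt_of_le_of_lt (le_of_lt hy.2) hx1⟩).differentiableAt).differentiableWithinAt
    · intro y hy
      rw [interior_Icc] at hy
      have hy' : y ∈ Set.Ico (0:ℝ) 1 := ⟨le_of_lt hy.1, lt_of_le_of_lt (le_of_lt hy.2) hx1⟩
      rw [(hderiv y hy').deriv]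
      have h1 : (0:ℝ) < 1 - y := by linarith [hy'.2]
      have h2 : (0:ℝ) < 1 + y := by linarith [hy'.1]
      have : 1 / (1 - y) ^ 2 + (-1) / (1 - y) - 1 / (1 + y) + 1 / (1 + y) ^ 2
          = y / (1 - y) ^ 2 - y / (1 + y) ^ 2 := by
        field_simp; ring
      rw [this]
      have : y / (1 + y) ^ 2 ≤ y / (1 - y) ^ 2 := by
        apply div_le_div_of_nonneg_left (le_of_lt hy.1) (by positivity)
        nlinarith [hy.1, hy'.2, sq_nonneg y]
      linarith
  have h0 : f 0 = 0 := by simp [hf]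
  have := hmono (Set.left_mem_Icc.mpr hx0) (Set.right_mem_Icc.mpr hx0) hx0
  rw [h0] at this
  simp only [hf] at this
  linarith

theorem stmt_18 (N M r : ℕ) (hN : 1 ≤ N) (hM : M ≤ N) (hr1 : 1 ≤ r)
    (ε δ p : ℝ) (hε0 : 0 < ε) (hε1 : ε < 1) (hδ0 : 0 < δ) (hδ1 : δ < 1)
    (hp : p = (M : ℝ) / N)
    (hr : (r : ℝ) > (1 + ε) * Real.log (2 / δ) / ((1 + ε) * Real.log (1 + ε) - ε))
    -- `Q ε r` upper-bounds the error probability of the inverse sampling estimator: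
    (hQbound : Pr N (fun σ => ε * p ≤ |pTilde N M r σ - p|) ≤ Q ε (r : ℝ)) :
    Q ε (r : ℝ) < δ ∧ Pr N (fun σ => |pTilde N M r σ - p| < ε * p) > 1 - δ := by
  have h1ε : (0:ℝ) < 1 + ε := by linarith
  have h1ε' : (0:ℝ) < 1 - ε := by linarith
  have hr0 : (0:ℝ) ≤ (r:ℝ) := Nat.cast_nonneg r
  -- log (1+ε) > ε/(1+ε)
  have ht1 : ε / (1 + ε) < 1 := by
    rw [div_lt_one h1ε]; linarith
  have ht0 : 0 < ε / (1 + ε) := by positivity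
  have hexp : Real.exp (ε / (1 + ε)) < 1 + ε := by
    have h := Real.add_one_lt_exp (x := -(ε / (1 + ε))) (by linarith [ht0] : -(ε / (1+ε)) ≠ 0)
    have h' : 0 < 1 - ε / (1 + ε) := by linarith
    have h2 : 1 - ε / (1 + ε) < (Real.exp (ε / (1 + ε)))⁻¹ := by
      rw [← Real.exp_neg]; linarith
    have hepos := Real.exp_pos (ε / (1 + ε))
    have h3 : Real.exp (ε / (1 + ε)) * (1 - ε / (1 + ε)) < 1 := by
      have := mul_lt_mul_of_pos_left h2 hepos
      rwa [mul_inv_cancel₀ (ne_of_gt hepos)] at this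
    have h4 : Real.exp (ε / (1 + ε)) < (1 - ε / (1 + ε))⁻¹ := by
      rw [inv_eq_one_div, lt_div_iff₀ h']; linarith
    calc Real.exp (ε / (1 + ε)) < (1 - ε / (1 + ε))⁻¹ := h4
      _ = 1 + ε := by field_simp; ring
  have hlog : ε / (1 + ε) < Real.log (1 + ε) :=
    (Real.lt_log_iff_exp_lt h1ε).mpr hexp
  have hD : 0 < (1 + ε) * Real.log (1 + ε) - ε := by
    have := (div_lt_iff₀ h1ε).mp hlog
    linarith
  have hlog2δ : 0 < Real.log (2 / δ) := by
    apply Real.log_pos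
    rw [lt_div_iff₀ hδ0]; linarith
  have hrD : (1 + ε) * Real.log (2 / δ) < (r:ℝ) * ((1 + ε) * Real.log (1 + ε) - ε) :=
    (div_lt_iff₀ hD).mp hr
  -- first summand < δ/2
  have hs1 : (1 + ε) ^ (-(r:ℝ)) * Real.exp (ε * r / (1 + ε)) < δ / 2 := by
    rw [Real.rpow_def_of_pos h1ε, ← Real.exp_add]
    have hlogδ2 : Real.log (δ / 2) = -Real.log (2 / δ) := by
      rw [Real.log_div (by linarith) (by norm_num), Real.log_div (by norm_num) (by linarith)]
      ring
    have hE : Real.log (1 + ε) * (-(r:ℝ)) + ε * r / (1 + ε)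
        = -((r:ℝ) * ((1 + ε) * Real.log (1 + ε) - ε)) / (1 + ε) := by
      field_simp; ring
    have : Real.log (1 + ε) * (-(r:ℝ)) + ε * r / (1 + ε) < Real.log (δ / 2) := by
      rw [hE, hlogδ2, div_lt_iff₀ h1ε, neg_lt, neg_mul, neg_neg]
      calc Real.log (2 / δ) * (1 + ε) = (1 + ε) * Real.log (2 / δ) := by ring
        _ < (r:ℝ) * ((1 + ε) * Real.log (1 + ε) - ε) := hrD
    calc Real.exp _ < Real.exp (Real.log (δ / 2)) := Real.exp_lt_exp.mpr this
      _ = δ / 2 := Real.exp_log (by linarith)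
  -- second summand ≤ first summand
  have hs2 : (1 - ε) ^ (-(r:ℝ)) * Real.exp (-(ε * r) / (1 - ε))
      ≤ (1 + ε) ^ (-(r:ℝ)) * Real.exp (ε * r / (1 + ε)) := by
    rw [Real.rpow_def_of_pos h1ε, Real.rpow_def_of_pos h1ε', ← Real.exp_add, ← Real.exp_add]
    apply Real.exp_le_exp.mpr
    have hki := key_ineq (le_of_lt hε0) hε1
    have := mul_le_mul_of_nonneg_left hki hr0
    have hq1 : ε * (r:ℝ) / (1 + ε) = (r:ℝ) * (ε / (1 + ε)) := by ring
    have hq2 : -(ε * (r:ℝ)) / (1 - ε) = -((r:ℝ) * (ε / (1 - ε))) := by ring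
    nlinarith [this]
  have hQ : Q ε (r:ℝ) < δ := by
    unfold Q
    linarith
  refine ⟨hQ, ?_⟩
  -- complement probability
  have hcard : ((Finset.univ.filter (fun σ : Equiv.Perm (Fin N) => ε * p ≤ |pTilde N M r σ - p|)).card : ℝ)
      + ((Finset.univ.filter (fun σ : Equiv.Perm (Fin N) => |pTilde N M r σ - p| < ε * p)).card : ℝ)
      = (Nat.factorial N : ℝ) := by
    have h := Finset.card_filter_add_card_filter_not (s := (Finset.univ : Finset (Equiv.Perm (Fin N))))
      (p := fun σ : Equiv.Perm (Fin N) => ε * p ≤ |pTilde N M r σ - p|)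
    have heq : (Finset.univ.filter (fun σ : Equiv.Perm (Fin N) => ¬ (ε * p ≤ |pTilde N M r σ - p|)))
        = Finset.univ.filter (fun σ : Equiv.Perm (Fin N) => |pTilde N M r σ - p| < ε * p) := by
      apply Finset.filter_congr
      intro σ _
      simp [not_le]
    rw [heq, Finset.card_univ, Fintype.card_perm, Fintype.card_fin] at h
    exact_mod_cast h
  have hfac : (0:ℝ) < (Nat.factorial N : ℝ) := by
    exact_mod_cast Nat.factorial_pos N
  have hPr : Pr N (fun σ => |pTilde N M r σ - p| < ε * p)
      = 1 - Pr N (fun σ => ε * p ≤ |pTilde N M r σ - p|) := by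
    unfold Pr
    field_simp
    simp only [mul_comm p ε]
    linarith [hcard]
  rw [hPr]
  have := le_trans hQbound (le_of_lt hQ)
  linarith
end
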